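/- arXiv:1609.06561 — 6 statements merged into one kernel-verified Lean document; each statement's English description precedes it below -/
import Mathlib

section
/- Let 0 < s < 1. Then there exists a real number u > 0 with tan(u) = u such that tan(u/s) ≠ u/s. Equivalently, among the positive roots u_k of the equation u = tan(u), there is some u_{k_0} such that u_{k_0}/s is not a root of the equation v = tan(v). -/
/-!
A real `u` is a root of `u = tan u` exactly when `u = nπ + arctan u` for an integer `n`, and
for every `n` this equation has a solution `u_n`, positive when `n ≥ 1`. If every `u_n / s` were
again a root, `u_n / s = m_n π + arctan (u_n / s)`, comparing the two equations would give
`m_n = a + n / s - g_n / π` for a constant `a` and `g_n = arctanGap s u_n`, which is positive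
(as `s < 1`) and tends to `0`. But `a + n t` cannot approach the integers strictly from above:
the differences `m_{n+1} - m_n` tend to `t`, so `t ∈ ℤ`; then `a ∈ ℤ`, and the errors are
positive integers.
-/

open Real Filter Topology Set

lemma tan_eq_self_iff_exists_int (v : ℝ) : tan v = v ↔ ∃ m : ℤ, v = m * π + arctan v := by
  constructor
  · intro hv
    have hcos : cos v ≠ 0 := by
      intro h
      rw [tan_eq_sin_div_cos, h, div_zero] at hv
      simp [← hv] at h
    have hsin : sin v = v * cos v := by
      rwa [tan_eq_sin_div_cos, div_eq_iff hcos] at hv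
    obtain ⟨m, hm⟩ := sin_eq_zero_iff.mp <| show sin (v - arctan v) = 0 by
      rw [sin_sub, sin_arctan, cos_arctan, hsin]
      ring
    exact ⟨m, by linarith⟩
  · rintro ⟨m, hm⟩
    calc tan v = tan (arctan v + m * π) := by rw [add_comm, ← hm]
      _ = v := by rw [tan_add_int_mul_pi, tan_arctan]

lemma exists_eq_add_arctan (c : ℝ) : ∃ u, u = c + arctan u := by
  have hcont : ContinuousOn (fun u => u - arctan u) (Icc (c - π / 2) (c + π / 2)) :=
    (continuous_id.sub continuous_arctan).continuousOn
  have hc : c ∈ Icc (c - π / 2 - arctan (c - π / 2)) (c + π / 2 - arctan (c + π / 2)) :=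
    ⟨by linarith [neg_pi_div_two_lt_arctan (c - π / 2)],
      by linarith [arctan_lt_pi_div_two (c + π / 2)]⟩
  obtain ⟨u, -, hu⟩ := intermediate_value_Icc (by linarith [pi_pos]) hcont hc
  exact ⟨u, by simp only at hu; linarith⟩

noncomputable def arctanGap (s u : ℝ) : ℝ := (π / 2 - arctan u) / s - (π / 2 - arctan (u / s))

lemma arctanGap_pos {s u : ℝ} (hs0 : 0 < s) (hs1 : s < 1) (hu : 0 < u) : 0 < arctanGap s u := by
  have hlt : arctan u < arctan (u / s) := arctan_strictMono ((lt_div_iff₀ hs0).2 (by nlinarith))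
  have hpos : 0 < π / 2 - arctan u := sub_pos.2 (arctan_lt_pi_div_two u)
  have hdiv : π / 2 - arctan u < (π / 2 - arctan u) / s := (lt_div_iff₀ hs0).2 (by nlinarith)
  unfold arctanGap
  linarith

lemma tendsto_arctanGap_atTop {s : ℝ} (hs : 0 < s) : Tendsto (arctanGap s) atTop (𝓝 0) := by
  have h := tendsto_nhds_of_tendsto_nhdsWithin tendsto_arctan_atTop
  have h' := h.comp (tendsto_id.atTop_div_const hs)
  show Tendsto (fun u => (π / 2 - arctan u) / s - (π / 2 - arctan (u / s))) atTop (𝓝 0)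
  have hπ : Tendsto (fun _ : ℝ => π / 2) atTop (𝓝 (π / 2)) := tendsto_const_nhds
  simpa using ((hπ.sub h).div_const s).sub (hπ.sub h')

lemma exists_intCast_eq_of_tendsto {k : ℕ → ℤ} {x : ℝ}
    (h : Tendsto (fun n => (k n : ℝ)) atTop (𝓝 x)) : ∃ N : ℤ, (N : ℝ) = x :=
  isClosed_range_intCast.mem_of_tendsto h (Eventually.of_forall fun n => ⟨k n, rfl⟩)

lemma not_tendsto_add_nat_mul_sub_intCast (a t : ℝ) (m : ℕ → ℤ)
    (hpos : ∀ n, (m n : ℝ) < a + n * t) :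
    ¬ Tendsto (fun n : ℕ => a + n * t - m n) atTop (𝓝 0) := by
  intro hε
  obtain ⟨N, rfl⟩ : ∃ N : ℤ, (N : ℝ) = t := by
    refine exists_intCast_eq_of_tendsto (k := fun n => m (n + 1) - m n) ?_
    have h := (tendsto_const_nhds (x := t)).sub ((hε.comp (tendsto_add_atTop_nat 1)).sub hε)
    rw [sub_self, sub_zero] at h
    refine h.congr fun n => ?_
    simp only [Function.comp_apply]
    push_cast
    ring
  obtain ⟨A, rfl⟩ : ∃ A : ℤ, (A : ℝ) = a := by
    refine exists_intCast_eq_of_tendsto (k := fun n => m n - n * N) ?_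
    have h := (tendsto_const_nhds (x := a)).sub hε
    rw [sub_zero] at h
    exact h.congr fun n => by push_cast; ring
  obtain ⟨n, hn⟩ := (hε.eventually (gt_mem_nhds one_pos)).exists
  have hint : (0 : ℤ) < A + n * N - m n := by exact_mod_cast sub_pos.2 (hpos n)
  have : (1 : ℝ) ≤ A + n * N - m n := by exact_mod_cast hint
  linarith

lemma add_nat_mul_sub_intCast_eq_arctanGap {s u : ℝ} (hs : 0 < s) {n : ℕ} {m : ℤ}
    (hu : u = (n + 1) * π + arctan u) (hus : u / s = m * π + arctan (u / s)) :
    3 / (2 * s) - 1 / 2 + n * s⁻¹ - m = arctanGap s u / π := by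
  have h1 : arctan u = u - (n + 1) * π := by linarith
  have h2 : arctan (u / s) = u / s - m * π := by linarith
  rw [arctanGap, h1, h2]
  field_simp
  ring

/-- Among the positive roots of `u = tan u`, for any `0 < s < 1` there is one, `u`,
such that `u / s` is not a root of `v = tan v`. -/
theorem tan_root_not_scaled_root (s : ℝ) (hs0 : 0 < s) (hs1 : s < 1) :
    ∃ u : ℝ, 0 < u ∧ Real.tan u = u ∧ Real.tan (u / s) ≠ u / s := by
  by_contra! hscaled
  choose u hu using fun n : ℕ => exists_eq_add_arctan ((n + 1) * π)
  have hu_gt (n : ℕ) : n * π < u n := by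
    linarith [hu n, neg_pi_div_two_lt_arctan (u n), pi_pos]
  have hu_pos (n : ℕ) : 0 < u n := lt_of_le_of_lt (by positivity) (hu_gt n)
  have hu_top : Tendsto u atTop atTop :=
    tendsto_atTop_mono (fun n => (hu_gt n).le)
      (tendsto_natCast_atTop_atTop.atTop_mul_const pi_pos)
  choose m hm using fun n => (tan_eq_self_iff_exists_int _).1 <|
    hscaled _ (hu_pos n) ((tan_eq_self_iff_exists_int _).2 ⟨n + 1, by push_cast; exact hu n⟩)
  have hgap (n : ℕ) := add_nat_mul_sub_intCast_eq_arctanGap hs0 (hu n) (hm n)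
  refine not_tendsto_add_nat_mul_sub_intCast (3 / (2 * s) - 1 / 2) s⁻¹ m (fun n => ?_) ?_
  · rw [← sub_pos, hgap]
    exact div_pos (arctanGap_pos hs0 hs1 (hu_pos n)) pi_pos
  · simp_rw [hgap]
    simpa using ((tendsto_arctanGap_atTop hs0).comp hu_top).div_const π
end

section
/- Let the parameters of the bivariate powered exponential model satisfy ρ² ≤ (α11·α22·s11^{α11}·s22^{α22})/(α12²·s12^{2α12}) · inf_{r>0} [ r^{α11+α22−2α12} · exp(2(s12·r)^{α12} − (s11·r)^{α11} − (s22·r)^{α22}) · q^{(1)}_{α11,s11}(r)·q^{(1)}_{α22,s22}(r) / (q^{(1)}_{α12,s12}(r))² ], where the infimum is taken over all r > 0 with q^{(1)}_{α12,s12}(r) ≠ 0. Then the bivariate powered exponential model C is positive definite in ℝ. -/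
open Matrix Set

noncomputable section

/-- A `2×2`-matrix-valued function `C` on `[0,∞)` is positive definite in `ℝⁿ` if for all
finitely many points `x₁,…,x_p ∈ ℝⁿ` and vectors `a₁,…,a_p ∈ ℝ²`,
`∑_{i,j} aᵢᵀ C(‖xᵢ - xⱼ‖) aⱼ ≥ 0`. -/
def PosDefIn (n : ℕ) (C : ℝ → Matrix (Fin 2) (Fin 2) ℝ) : Prop :=
  ∀ (p : ℕ) (x : Fin p → EuclideanSpace ℝ (Fin n)) (a : Fin p → Fin 2 → ℝ),
    0 ≤ ∑ i : Fin p, ∑ j : Fin p, a i ⬝ᵥ (C ‖x i - x j‖).mulVec (a j)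

/-- The auxiliary function `q⁽¹⁾_{α,s}(r) = α (s r)^α - α + 1`. -/
def q1 (α s r : ℝ) : ℝ := α * (s * r) ^ α - α + 1

/-!
For `r ≥ 0` each entry `exp (-(s r)^α)` is the mixture `∫₀^∞ (u - r)₊ f''(u) du` of triangle
functions, by Taylor's formula with integral remainder taken at `∞` (`f = powExp α s`). Hence
`C(r) = ∫₀^∞ (u - r)₊ M(u) du`, where `M(u)` is the matrix of the second derivatives `g_ij(u)`.
The triangle function `(u - |t|)₊` is the autocorrelation of the indicator of an interval of
length `u`, hence positive definite on `ℝ`; by the Schur product theorem `C` is positive definite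
as soon as every `M(u)` is positive semidefinite. The diagonal `g₁₁, g₂₂` is nonnegative because
`α₁₁, α₂₂ ≤ 1`, and the condition on `ρ` says precisely `ρ² g₁₂² ≤ g₁₁ g₂₂`: the prefactor of the
infimum times the function under it is `g₁₁ g₂₂ / g₁₂²`.
-/

open Real MeasureTheory Filter Topology

theorem volume_real_Ioc_inter_Ioc_add (y z u : ℝ) :
    volume.real (Ioc y (y + u) ∩ Ioc z (z + u)) = max (u - |y - z|) 0 := by
  rw [Ioc_inter_Ioc, Real.volume_real_Ioc, min_add_add_right]
  congr 1
  linarith [max_sub_min_eq_abs' y z]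

theorem posSemidef_max_sub_abs_sub {ι : Type*} [Finite ι] (y : ι → ℝ) (u : ℝ) :
    (Matrix.of fun i j => max (u - |y i - y j|) 0).PosSemidef := by
  simpa only [volume_real_Ioc_inter_Ioc_add] using
    posSemidef_matrix_measure_inter (μ := volume) (s := fun i => Ioc (y i) (y i + u))
      (fun _ => measurableSet_Ioc) fun _ => measure_Ioc_lt_top.ne

open scoped Kronecker in
theorem Matrix.PosSemidef.sum_mul_dotProduct_mulVec_nonneg {ι n : Type*} [Fintype ι]
    [Fintype n] {K : Matrix ι ι ℝ} {M : Matrix n n ℝ} (hK : K.PosSemidef) (hM : M.PosSemidef)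
    (a : ι → n → ℝ) : 0 ≤ ∑ i, ∑ j, K i j * (a i ⬝ᵥ M *ᵥ a j) := by
  refine ((hK.kronecker hM).dotProduct_mulVec_nonneg fun p => a p.1 p.2).trans_eq ?_
  simp only [star_trivial, dotProduct, mulVec, Fintype.sum_prod_type, kroneckerMap_apply,
    Finset.mul_sum]
  refine Finset.sum_congr rfl fun i _ => Finset.sum_comm.trans ?_
  refine Finset.sum_congr rfl fun j _ => Finset.sum_congr rfl fun k _ =>
    Finset.sum_congr rfl fun l _ => by ring

theorem posSemidef_fin_two_of_sq_le {a b c : ℝ} (ha : 0 ≤ a) (hc : 0 ≤ c) (hb : b ^ 2 ≤ a * c) :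
    (!![a, b; b, c]).PosSemidef := by
  refine .of_dotProduct_mulVec_nonneg ?_ fun x => ?_
  · ext i j; fin_cases i <;> fin_cases j <;> rfl
  · simp only [dotProduct, mulVec, Fin.sum_univ_two, star_trivial]
    simp only [Fin.isValue, of_apply, cons_val', cons_val_zero, cons_val_fin_one, cons_val_one]
    rcases ha.eq_or_lt with rfl | ha
    · have : b = 0 := by nlinarith
      subst this; nlinarith [sq_nonneg (x 1)]
    · nlinarith [sq_nonneg (a * x 0 + b * x 1), sq_nonneg (x 1)]

section MatrixIntegral

variable {α n : Type*} [MeasurableSpace α] [Fintype n] {μ : Measure α}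
  {F : α → Matrix n n ℝ}

theorem integrable_dotProduct_mulVec (hF : ∀ k l, Integrable (fun u => F u k l) μ)
    (v w : n → ℝ) : Integrable (fun u => v ⬝ᵥ F u *ᵥ w) μ :=
  integrable_finsetSum _ fun k _ =>
    (integrable_finsetSum _ fun l _ => (hF k l).mul_const _).const_mul _

theorem integral_dotProduct_mulVec (hF : ∀ k l, Integrable (fun u => F u k l) μ)
    (v w : n → ℝ) :
    ∫ u, v ⬝ᵥ F u *ᵥ w ∂μ = v ⬝ᵥ (Matrix.of fun k l => ∫ u, F u k l ∂μ) *ᵥ w := by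
  simp only [dotProduct, mulVec, Matrix.of_apply]
  rw [integral_finsetSum _ fun k _ =>
    (integrable_finsetSum _ fun l _ => (hF k l).mul_const _).const_mul _]
  refine Finset.sum_congr rfl fun k _ => ?_
  rw [integral_const_mul, integral_finsetSum _ fun l _ => (hF k l).mul_const _]
  simp only [integral_mul_const]

end MatrixIntegral

theorem EuclideanSpace.norm_sub_fin_one (x y : EuclideanSpace ℝ (Fin 1)) :
    ‖x - y‖ = |x 0 - y 0| := by
  simp [EuclideanSpace.norm_eq, Real.sqrt_sq_eq_abs]

theorem posDefIn_one_of_integral_max_sub {C M : ℝ → Matrix (Fin 2) (Fin 2) ℝ}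
    (hM : ∀ u > 0, (M u).PosSemidef)
    (hint : ∀ r ≥ 0, ∀ k l, IntegrableOn (fun u => max (u - r) 0 * M u k l) (Ioi 0))
    (hC : ∀ r ≥ 0, C r = Matrix.of fun k l => ∫ u in Ioi 0, max (u - r) 0 * M u k l) :
    PosDefIn 1 C := by
  intro p x a
  have hterm (i j : Fin p) : a i ⬝ᵥ C ‖x i - x j‖ *ᵥ a j =
      ∫ u in Ioi 0, a i ⬝ᵥ (max (u - ‖x i - x j‖) 0 • M u) *ᵥ a j := by
    rw [hC _ (norm_nonneg _), integral_dotProduct_mulVec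
      (F := fun u => max (u - ‖x i - x j‖) 0 • M u) (hint _ (norm_nonneg _))]
    rfl
  have hint' (i j : Fin p) : IntegrableOn
      (fun u => a i ⬝ᵥ (max (u - ‖x i - x j‖) 0 • M u) *ᵥ a j) (Ioi 0) :=
    integrable_dotProduct_mulVec (hint _ (norm_nonneg _)) _ _
  simp_rw [hterm]
  simp_rw [← integral_finsetSum _ fun j _ => hint' _ j]
  rw [← integral_finsetSum _ fun i _ => integrable_finsetSum _ fun j _ => hint' i j]
  refine setIntegral_nonneg measurableSet_Ioi fun u hu => ?_
  simp only [smul_mulVec, dotProduct_smul, smul_eq_mul, EuclideanSpace.norm_sub_fin_one]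
  exact (posSemidef_max_sub_abs_sub (fun i => x i 0) u).sum_mul_dotProduct_mulVec_nonneg
    (hM u hu) a

/-- The limit hypothesis `hf'_r` stands in for continuity of `f'` at `r`, which fails at `r = 0`
for `powExp α s` with `α < 1`. -/
theorem integral_Ioi_sub_mul_eq {f f' f'' : ℝ → ℝ} {r : ℝ}
    (hf : ∀ u ∈ Ioi r, HasDerivAt f (f' u) u) (hf' : ∀ u ∈ Ioi r, HasDerivAt f' (f'' u) u)
    (hf_r : ContinuousWithinAt f (Ioi r) r)
    (hf'_r : Tendsto (fun u => (u - r) * f' u) (𝓝[>] r) (𝓝 0))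
    (hf_top : Tendsto f atTop (𝓝 0))
    (hf'_top : Tendsto (fun u => (u - r) * f' u) atTop (𝓝 0))
    (hint : IntegrableOn (fun u => (u - r) * f'' u) (Ioi r)) :
    ∫ u in Ioi r, (u - r) * f'' u = f r := by
  have hderiv : ∀ u ∈ Ioi r,
      HasDerivAt (fun v => (v - r) * f' v - f v) ((u - r) * f'' u) u := fun u hu => by
    refine ((((hasDerivAt_id' u).sub_const r).mul (hf' u hu)).sub (hf u hu)).congr_deriv ?_
    ring
  have hcont : ContinuousWithinAt (fun v => (v - r) * f' v - f v) (Ici r) r := by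
    rw [← continuousWithinAt_Ioi_iff_Ici]
    simpa [ContinuousWithinAt] using hf'_r.sub hf_r
  rw [integral_Ioi_of_hasDerivAt_of_tendsto hcont hderiv hint
    (by simpa using hf'_top.sub hf_top)]
  simp

def powExp (α s r : ℝ) : ℝ := exp (-(s * r) ^ α)

def powExpDeriv (α s u : ℝ) : ℝ := -(α * (s * u) ^ α / u) * powExp α s u

def powExpDeriv2 (α s u : ℝ) : ℝ := α * (s * u) ^ α / u ^ 2 * powExp α s u * q1 α s u

section PowExp

variable {α s : ℝ}

theorem hasDerivAt_const_mul_rpow (hs : 0 < s) {u : ℝ} (hu : 0 < u) :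
    HasDerivAt (fun v => (s * v) ^ α) (α * (s * u) ^ α / u) u := by
  have hsu : s * u ≠ 0 := (mul_pos hs hu).ne'
  refine (((hasDerivAt_id' u).const_mul s).rpow_const (p := α) (Or.inl hsu)).congr_deriv ?_
  rw [Real.rpow_sub_one hsu]
  field_simp

theorem hasDerivAt_powExp (hs : 0 < s) {u : ℝ} (hu : 0 < u) :
    HasDerivAt (powExp α s) (powExpDeriv α s u) u := by
  refine ((hasDerivAt_const_mul_rpow (α := α) hs hu).neg.exp).congr_deriv ?_
  simp only [powExpDeriv, powExp, Pi.neg_apply]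
  ring

theorem hasDerivAt_powExpDeriv (hs : 0 < s) {u : ℝ} (hu : 0 < u) :
    HasDerivAt (powExpDeriv α s) (powExpDeriv2 α s u) u := by
  have h := ((((hasDerivAt_const_mul_rpow (α := α) hs hu).const_mul α).div (hasDerivAt_id' u)
    hu.ne').neg).mul (hasDerivAt_powExp (α := α) hs hu)
  refine h.congr_deriv ?_
  simp only [powExpDeriv2, powExpDeriv, q1, Pi.neg_apply, Pi.div_apply]
  field_simp
  ring

theorem continuous_powExp (hα : 0 < α) : Continuous (powExp α s) := by
  have := Real.continuous_rpow_const hα.le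
  unfold powExp
  fun_prop

theorem tendsto_powExp_atTop (hα : 0 < α) (hs : 0 < s) :
    Tendsto (powExp α s) atTop (𝓝 0) :=
  tendsto_exp_neg_atTop_nhds_zero.comp
    ((tendsto_rpow_atTop hα).comp (tendsto_id.const_mul_atTop hs))

theorem tendsto_mul_rpow_mul_powExp_atTop (hα : 0 < α) (hs : 0 < s) :
    Tendsto (fun u => α * (s * u) ^ α * powExp α s u) atTop (𝓝 0) := by
  have h := (((tendsto_pow_mul_exp_neg_atTop_nhds_zero 1).comp
    ((tendsto_rpow_atTop hα).comp (tendsto_id.const_mul_atTop hs))).const_mul α)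
  simpa [powExp, mul_assoc] using h

theorem tendsto_sub_mul_powExpDeriv_atTop (hα : 0 < α) (hs : 0 < s) (r : ℝ) :
    Tendsto (fun u => (u - r) * powExpDeriv α s u) atTop (𝓝 0) := by
  have hfrac : Tendsto (fun u : ℝ => (u - r) / u) atTop (𝓝 1) := by
    have h := (tendsto_const_nhds (x := (1 : ℝ))).sub
      ((tendsto_const_nhds (x := r)).div_atTop tendsto_id)
    rw [sub_zero] at h
    refine h.congr' ?_
    filter_upwards [eventually_ne_atTop 0] with u hu
    simp [sub_div, hu]
  have h := hfrac.neg.mul (tendsto_mul_rpow_mul_powExp_atTop hα hs)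
  rw [mul_zero] at h
  refine h.congr fun u => ?_
  simp only [powExpDeriv]
  ring

theorem tendsto_sub_mul_powExpDeriv_nhdsGT (hα : 0 < α) (hs : 0 < s) {r : ℝ} (hr : 0 ≤ r) :
    Tendsto (fun u => (u - r) * powExpDeriv α s u) (𝓝[>] r) (𝓝 0) := by
  rcases hr.eq_or_lt with rfl | hr
  · have hcont : Continuous fun u => α * (s * u) ^ α * powExp α s u := by
      have := Real.continuous_rpow_const hα.le
      have := continuous_powExp (α := α) (s := s) hα
      fun_prop
    have h := (hcont.tendsto 0).neg.mono_left (nhdsWithin_le_nhds (s := Ioi 0))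
    simp only [mul_zero, Real.zero_rpow hα.ne', zero_mul, neg_zero] at h
    refine h.congr' ?_
    filter_upwards [self_mem_nhdsWithin] with u (hu : 0 < u)
    simp only [powExpDeriv, sub_zero]
    field_simp
  · have h : ContinuousAt (fun u => (u - r) * powExpDeriv α s u) r :=
      (continuousAt_id.sub continuousAt_const).mul (hasDerivAt_powExpDeriv hs hr).continuousAt
    simpa using h.tendsto.mono_left nhdsWithin_le_nhds

theorem abs_powExpDeriv2_le (hα : 0 < α) (hs : 0 < s) {u : ℝ} (hu : 0 < u) :
    |powExpDeriv2 α s u| ≤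
      α * (s * u) ^ α / u ^ 2 * powExp α s u * (α * (s * u) ^ α + α + 1) := by
  have hw : 0 ≤ (s * u) ^ α := by positivity
  have hq : |q1 α s u| ≤ α * (s * u) ^ α + α + 1 := by
    rw [q1, abs_le]
    constructor <;> nlinarith
  rw [powExpDeriv2, abs_mul, abs_of_nonneg (by unfold powExp; positivity)]
  exact mul_le_mul_of_nonneg_left hq (by unfold powExp; positivity)

theorem integrableOn_max_sub_mul_powExpDeriv2 (hα : 0 < α) (hs : 0 < s) {r : ℝ} (hr : 0 ≤ r) :
    IntegrableOn (fun u => max (u - r) 0 * powExpDeriv2 α s u) (Ioi 0) := by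
  set b := s ^ α
  have hb : 0 < b := by positivity
  have hB : IntegrableOn (fun u => α * b * (α * b * (u ^ (2 * α - 1) * exp (-b * u ^ α)) +
      (α + 1) * (u ^ (α - 1) * exp (-b * u ^ α)))) (Ioi 0) :=
    (((integrableOn_rpow_mul_exp_neg_mul_rpow (by linarith) hα hb).const_mul _).add
      ((integrableOn_rpow_mul_exp_neg_mul_rpow (by linarith) hα hb).const_mul _)).const_mul _
  refine hB.mono' ?_ (ae_restrict_of_forall_mem measurableSet_Ioi fun u (hu : 0 < u) => ?_)
  · unfold powExpDeriv2 powExp q1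
    fun_prop
  have hw : (s * u) ^ α = b * u ^ α := mul_rpow hs.le hu.le
  have e1 : u ^ (α - 1) = u ^ α / u := rpow_sub_one hu.ne' α
  have e2 : u ^ (2 * α - 1) = u ^ α * u ^ α / u := by
    rw [show 2 * α - 1 = α + (α - 1) by ring, rpow_add hu, e1, mul_div_assoc]
  calc ‖max (u - r) 0 * powExpDeriv2 α s u‖
      ≤ u * (α * (s * u) ^ α / u ^ 2 * powExp α s u * (α * (s * u) ^ α + α + 1)) := by
        rw [norm_mul, Real.norm_of_nonneg (le_max_right _ _), Real.norm_eq_abs]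
        exact mul_le_mul (max_le (by linarith) hu.le) (abs_powExpDeriv2_le hα hs hu)
          (abs_nonneg _) hu.le
    _ = _ := by
        rw [e1, e2, powExp, hw, neg_mul]
        field_simp
        ring

theorem integral_Ioi_max_sub_mul_powExpDeriv2 (hα : 0 < α) (hs : 0 < s) {r : ℝ} (hr : 0 ≤ r) :
    ∫ u in Ioi 0, max (u - r) 0 * powExpDeriv2 α s u = powExp α s r := by
  have hsub : Ioi r ⊆ Ioi 0 := Ioi_subset_Ioi hr
  have hmax : EqOn (fun u => max (u - r) 0 * powExpDeriv2 α s u)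
      (fun u => (u - r) * powExpDeriv2 α s u) (Ioi r) := fun u (hu : r < u) => by
    simp only [max_eq_left (sub_nonneg.2 hu.le)]
  rw [setIntegral_eq_of_subset_of_forall_sdiff_eq_zero measurableSet_Ioi hsub
      fun u hu => by rw [max_eq_right (sub_nonpos.2 (not_lt.1 hu.2)), zero_mul],
    setIntegral_congr_fun measurableSet_Ioi hmax]
  exact integral_Ioi_sub_mul_eq (fun u hu => hasDerivAt_powExp hs (hr.trans_lt hu))
    (fun u hu => hasDerivAt_powExpDeriv hs (hr.trans_lt hu))
    (continuous_powExp hα).continuousWithinAt (tendsto_sub_mul_powExpDeriv_nhdsGT hα hs hr)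
    (tendsto_powExp_atTop hα hs) (tendsto_sub_mul_powExpDeriv_atTop hα hs r)
    (((integrableOn_max_sub_mul_powExpDeriv2 hα hs hr).mono_set hsub).congr_fun hmax
      measurableSet_Ioi)

theorem q1_nonneg (hα : 0 < α) (hα1 : α ≤ 1) {u : ℝ} (hsu : 0 ≤ s * u) : 0 ≤ q1 α s u := by
  have := rpow_nonneg hsu α
  unfold q1
  nlinarith

theorem powExpDeriv2_nonneg (hα : 0 < α) (hα1 : α ≤ 1) (hs : 0 < s) {u : ℝ} (hu : 0 < u) :
    0 ≤ powExpDeriv2 α s u := by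
  have := q1_nonneg hα hα1 (mul_pos hs hu).le
  unfold powExpDeriv2 powExp
  positivity

end PowExp

def powExpRatio (α11 α12 α22 s11 s12 s22 r : ℝ) : ℝ :=
  r ^ (α11 + α22 - 2 * α12) * exp (2 * (s12 * r) ^ α12 - (s11 * r) ^ α11 - (s22 * r) ^ α22) *
    (q1 α11 s11 r * q1 α22 s22 r) / (q1 α12 s12 r) ^ 2

section CrossCovariance

variable {α11 α12 α22 s11 s12 s22 : ℝ}

theorem powExpDeriv2_mul_powExpDeriv2_eq (hs11 : 0 < s11) (hs12 : 0 < s12) (hs22 : 0 < s22)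
    (hα12 : α12 ≠ 0) {u : ℝ} (hu : 0 < u) (hq : q1 α12 s12 u ≠ 0) :
    powExpDeriv2 α11 s11 u * powExpDeriv2 α22 s22 u =
      α11 * α22 * s11 ^ α11 * s22 ^ α22 / (α12 ^ 2 * s12 ^ (2 * α12)) *
        powExpRatio α11 α12 α22 s11 s12 s22 u * powExpDeriv2 α12 s12 u ^ 2 := by
  have hexp : exp (2 * (s12 * u) ^ α12 - (s11 * u) ^ α11 - (s22 * u) ^ α22) =
      powExp α11 s11 u * powExp α22 s22 u / powExp α12 s12 u ^ 2 := by
    rw [powExp, powExp, powExp, ← exp_add, sq, ← exp_add, ← exp_sub]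
    ring_nf
  have hu2 : u ^ (α11 + α22 - 2 * α12) = u ^ α11 * u ^ α22 / (u ^ α12) ^ 2 := by
    rw [rpow_sub hu, rpow_add hu, ← rpow_natCast, ← rpow_mul hu.le]
    ring_nf
  have hs2 : s12 ^ (2 * α12) = (s12 ^ α12) ^ 2 := by
    rw [← rpow_natCast, ← rpow_mul hs12.le]
    ring_nf
  rw [powExpRatio, hexp]
  simp only [powExpDeriv2, hu2, hs2, mul_rpow hs11.le hu.le,
    mul_rpow hs12.le hu.le, mul_rpow hs22.le hu.le]
  have : 0 < powExp α11 s11 u := exp_pos _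
  have : 0 < powExp α22 s22 u := exp_pos _
  have : 0 < powExp α12 s12 u := exp_pos _
  field_simp

theorem powExpRatio_nonneg (hα11 : α11 ∈ Ioc 0 1) (hα22 : α22 ∈ Ioc 0 1) (hs11 : 0 < s11)
    (hs22 : 0 < s22) {r : ℝ} (hr : 0 < r) : 0 ≤ powExpRatio α11 α12 α22 s11 s12 s22 r := by
  have := q1_nonneg hα11.1 hα11.2 (mul_pos hs11 hr).le
  have := q1_nonneg hα22.1 hα22.2 (mul_pos hs22 hr).le
  have := rpow_nonneg hr.le (α11 + α22 - 2 * α12)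
  unfold powExpRatio
  positivity

theorem sq_mul_powExpDeriv2_sq_le {ρ : ℝ} (hs11 : 0 < s11) (hs12 : 0 < s12) (hs22 : 0 < s22)
    (hα11 : α11 ∈ Ioc 0 1) (hα22 : α22 ∈ Ioc 0 1) (hα12 : 0 < α12)
    (hρ : ρ ^ 2 ≤ α11 * α22 * s11 ^ α11 * s22 ^ α22 / (α12 ^ 2 * s12 ^ (2 * α12)) *
      sInf (powExpRatio α11 α12 α22 s11 s12 s22 '' {r : ℝ | 0 < r ∧ q1 α12 s12 r ≠ 0}))
    {u : ℝ} (hu : 0 < u) :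
    ρ ^ 2 * powExpDeriv2 α12 s12 u ^ 2 ≤ powExpDeriv2 α11 s11 u * powExpDeriv2 α22 s22 u := by
  have h11 := powExpDeriv2_nonneg hα11.1 hα11.2 hs11 hu
  have h22 := powExpDeriv2_nonneg hα22.1 hα22.2 hs22 hu
  by_cases hq : q1 α12 s12 u = 0
  · rw [show powExpDeriv2 α12 s12 u = 0 by simp [powExpDeriv2, hq]]
    simpa using mul_nonneg h11 h22
  have hbdd : BddBelow (powExpRatio α11 α12 α22 s11 s12 s22 '' {r | 0 < r ∧ q1 α12 s12 r ≠ 0}) :=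
    ⟨0, by rintro _ ⟨r, ⟨hr, -⟩, rfl⟩; exact powExpRatio_nonneg hα11 hα22 hs11 hs22 hr⟩
  have hK : 0 ≤ α11 * α22 * s11 ^ α11 * s22 ^ α22 / (α12 ^ 2 * s12 ^ (2 * α12)) := by
    have := hα11.1
    have := hα22.1
    positivity
  rw [powExpDeriv2_mul_powExpDeriv2_eq hs11 hs12 hs22 hα12.ne' hu hq]
  gcongr
  exact hρ.trans (mul_le_mul_of_nonneg_left (csInf_le hbdd ⟨u, ⟨hu, hq⟩, rfl⟩) hK)

theorem posSemidef_powExpDeriv2_matrix {σ1 σ2 ρ : ℝ} (hs11 : 0 < s11) (hs12 : 0 < s12)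
    (hs22 : 0 < s22) (hα11 : α11 ∈ Ioc 0 1) (hα22 : α22 ∈ Ioc 0 1) (hα12 : 0 < α12)
    (hρ : ρ ^ 2 ≤ α11 * α22 * s11 ^ α11 * s22 ^ α22 / (α12 ^ 2 * s12 ^ (2 * α12)) *
      sInf (powExpRatio α11 α12 α22 s11 s12 s22 '' {r : ℝ | 0 < r ∧ q1 α12 s12 r ≠ 0}))
    {u : ℝ} (hu : 0 < u) :
    (!![σ1 ^ 2 * powExpDeriv2 α11 s11 u, ρ * σ1 * σ2 * powExpDeriv2 α12 s12 u;
       ρ * σ1 * σ2 * powExpDeriv2 α12 s12 u, σ2 ^ 2 * powExpDeriv2 α22 s22 u]).PosSemidef := by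
  refine posSemidef_fin_two_of_sq_le
    (mul_nonneg (sq_nonneg _) (powExpDeriv2_nonneg hα11.1 hα11.2 hs11 hu))
    (mul_nonneg (sq_nonneg _) (powExpDeriv2_nonneg hα22.1 hα22.2 hs22 hu)) ?_
  calc (ρ * σ1 * σ2 * powExpDeriv2 α12 s12 u) ^ 2
      = σ1 ^ 2 * σ2 ^ 2 * (ρ ^ 2 * powExpDeriv2 α12 s12 u ^ 2) := by ring
    _ ≤ σ1 ^ 2 * σ2 ^ 2 * (powExpDeriv2 α11 s11 u * powExpDeriv2 α22 s22 u) :=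
      mul_le_mul_of_nonneg_left (sq_mul_powExpDeriv2_sq_le hs11 hs12 hs22 hα11 hα22 hα12 hρ hu)
        (by positivity)
    _ = _ := by ring

end CrossCovariance

theorem bivariate_powered_exponential_posDef_R1_general
    (σ1 σ2 s11 s12 s22 α11 α12 α22 ρ : ℝ)
    (hs11 : 0 < s11) (hs12 : 0 < s12) (hs22 : 0 < s22)
    (hα11 : α11 ∈ Ioc (0 : ℝ) 1) (hα22 : α22 ∈ Ioc (0 : ℝ) 1)
    (hα12 : α12 ∈ Ioc (0 : ℝ) 2)
    (hρ2 : ρ ^ 2 ≤ α11 * α22 * s11 ^ α11 * s22 ^ α22 / (α12 ^ 2 * s12 ^ (2 * α12)) *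
      sInf ((fun r : ℝ =>
          r ^ (α11 + α22 - 2 * α12) *
            Real.exp (2 * (s12 * r) ^ α12 - (s11 * r) ^ α11 - (s22 * r) ^ α22) *
            (q1 α11 s11 r * q1 α22 s22 r) / (q1 α12 s12 r) ^ 2) ''
        {r : ℝ | 0 < r ∧ q1 α12 s12 r ≠ 0})) :
    PosDefIn 1 (fun r =>
      !![σ1 ^ 2 * Real.exp (-(s11 * r) ^ α11), ρ * σ1 * σ2 * Real.exp (-(s12 * r) ^ α12);
         ρ * σ1 * σ2 * Real.exp (-(s12 * r) ^ α12), σ2 ^ 2 * Real.exp (-(s22 * r) ^ α22)]) := by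
  refine posDefIn_one_of_integral_max_sub (M := fun u =>
    !![σ1 ^ 2 * powExpDeriv2 α11 s11 u, ρ * σ1 * σ2 * powExpDeriv2 α12 s12 u;
       ρ * σ1 * σ2 * powExpDeriv2 α12 s12 u, σ2 ^ 2 * powExpDeriv2 α22 s22 u])
    (fun u hu => posSemidef_powExpDeriv2_matrix hs11 hs12 hs22 hα11 hα22 hα12.1 hρ2 hu)
    (fun r hr k l => ?_) (fun r hr => ?_)
  · have hint {α s : ℝ} (c : ℝ) (hα : 0 < α) (hs : 0 < s) :
        IntegrableOn (fun u => max (u - r) 0 * (c * powExpDeriv2 α s u)) (Ioi 0) := by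
      simpa only [IntegrableOn, mul_left_comm] using
        (integrableOn_max_sub_mul_powExpDeriv2 hα hs hr).const_mul c
    fin_cases k <;> fin_cases l
    exacts [hint _ hα11.1 hs11, hint _ hα12.1 hs12, hint _ hα12.1 hs12, hint _ hα22.1 hs22]
  · ext k l
    fin_cases k <;> fin_cases l <;>
      simp [mul_left_comm, integral_const_mul, powExp,
        integral_Ioi_max_sub_mul_powExpDeriv2 hα11.1 hs11 hr,
        integral_Ioi_max_sub_mul_powExpDeriv2 hα12.1 hs12 hr,
        integral_Ioi_max_sub_mul_powExpDeriv2 hα22.1 hs22 hr]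

/-- Sufficient condition for positive definiteness of the bivariate powered exponential
model in `ℝ`. -/
theorem bivariate_powered_exponential_posDef_R1
    (σ1 σ2 s11 s12 s22 α11 α12 α22 ρ : ℝ)
    (hσ1 : 0 < σ1) (hσ2 : 0 < σ2)
    (hs11 : 0 < s11) (hs12 : 0 < s12) (hs22 : 0 < s22)
    (hα11 : α11 ∈ Ioc (0 : ℝ) 1) (hα22 : α22 ∈ Ioc (0 : ℝ) 1)
    (hα12 : α12 ∈ Ioc (0 : ℝ) 2)
    (hρ : ρ ∈ Icc (-1 : ℝ) 1)
    (hρ2 : ρ ^ 2 ≤ α11 * α22 * s11 ^ α11 * s22 ^ α22 / (α12 ^ 2 * s12 ^ (2 * α12)) *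
      sInf ((fun r : ℝ =>
          r ^ (α11 + α22 - 2 * α12) *
            Real.exp (2 * (s12 * r) ^ α12 - (s11 * r) ^ α11 - (s22 * r) ^ α22) *
            (q1 α11 s11 r * q1 α22 s22 r) / (q1 α12 s12 r) ^ 2) ''
        {r : ℝ | 0 < r ∧ q1 α12 s12 r ≠ 0})) :
    PosDefIn 1 (fun r =>
      !![σ1 ^ 2 * Real.exp (-(s11 * r) ^ α11), ρ * σ1 * σ2 * Real.exp (-(s12 * r) ^ α12);
         ρ * σ1 * σ2 * Real.exp (-(s12 * r) ^ α12), σ2 ^ 2 * Real.exp (-(s22 * r) ^ α22)]) :=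
  bivariate_powered_exponential_posDef_R1_general σ1 σ2 s11 s12 s22 α11 α12 α22 ρ hs11 hs12 hs22
    hα11 hα22 hα12 hρ2
end
end

section
/- Let n ≥ 1 be a natural number and consider the bivariate powered exponential model C with parameters σ1, σ2 > 0, s11, s12, s22 > 0, α11, α22 ∈ (0,1], α12 ∈ (0,2], ρ ∈ [−1,1]. If α12 < (α11 + α22)/2 and C is positive definite in ℝⁿ, then ρ = 0. -/
/-!
Positive definiteness at two points `0` and `x` with `‖x‖ = r`, tested against the vectors `a`
and `-a`, makes `C(0) - C(r)` positive semidefinite, so its determinant is nonnegative: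
`ρ² (1 - e^{-(s₁₂r)^α₁₂})² ≤ (1 - e^{-(s₁₁r)^α₁₁}) (1 - e^{-(s₂₂r)^α₂₂})`.
Since `t e^{-t} ≤ 1 - e^{-t} ≤ t`, this yields
`ρ² s₁₂^{2α₁₂} ≤ e^{2(s₁₂r)^α₁₂} s₁₁^α₁₁ s₂₂^α₂₂ r^{α₁₁+α₂₂-2α₁₂}` for every `r > 0`,
and the right-hand side tends to `0` as `r → 0⁺` because `2α₁₂ < α₁₁ + α₂₂`.
-/

open Matrix Set

noncomputable section

open Real Filter Topology

theorem PosDefIn.dotProduct_sub_mulVec_nonneg {n : ℕ} {C : ℝ → Matrix (Fin 2) (Fin 2) ℝ}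
    (hC : PosDefIn n C) (hn : 1 ≤ n) {r : ℝ} (hr : 0 ≤ r) (w : Fin 2 → ℝ) :
    0 ≤ w ⬝ᵥ (C 0 - C r) *ᵥ w := by
  obtain ⟨v, hv⟩ : ∃ v : EuclideanSpace ℝ (Fin n), ‖v‖ = r :=
    ⟨EuclideanSpace.single ⟨0, hn⟩ r, by simp [abs_of_nonneg hr]⟩
  have h := hC 2 ![0, v] ![w, -w]
  simp only [Fin.sum_univ_two, cons_val_zero, cons_val_one, cons_val_fin_one, sub_self, norm_zero,
    zero_sub, sub_zero, norm_neg, hv, mulVec_neg, dotProduct_neg, neg_dotProduct, neg_neg] at h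
  rw [sub_mulVec, dotProduct_sub]
  linarith

theorem PosDefIn.posSemidef_sub {n : ℕ} {C : ℝ → Matrix (Fin 2) (Fin 2) ℝ}
    (hC : PosDefIn n C) (hn : 1 ≤ n) (hsymm : ∀ r, (C r).IsHermitian) {r : ℝ} (hr : 0 ≤ r) :
    (C 0 - C r).PosSemidef :=
  .of_dotProduct_mulVec_nonneg ((hsymm 0).sub (hsymm r)) fun w =>
    by simpa using hC.dotProduct_sub_mulVec_nonneg hn hr w

theorem mul_exp_neg_le_one_sub_exp_neg (t : ℝ) : t * exp (-t) ≤ 1 - exp (-t) := by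
  have h : (t + 1) * exp (-t) ≤ exp t * exp (-t) :=
    mul_le_mul_of_nonneg_right (add_one_le_exp t) (exp_pos _).le
  rw [← exp_add, add_neg_cancel, exp_zero] at h
  linarith

def bivariatePoweredExponential (σ1 σ2 s11 s12 s22 α11 α12 α22 ρ r : ℝ) :
    Matrix (Fin 2) (Fin 2) ℝ :=
  !![σ1 ^ 2 * exp (-(s11 * r) ^ α11), ρ * σ1 * σ2 * exp (-(s12 * r) ^ α12);
     ρ * σ1 * σ2 * exp (-(s12 * r) ^ α12), σ2 ^ 2 * exp (-(s22 * r) ^ α22)]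

theorem bivariatePoweredExponential_isHermitian (σ1 σ2 s11 s12 s22 α11 α12 α22 ρ r : ℝ) :
    (bivariatePoweredExponential σ1 σ2 s11 s12 s22 α11 α12 α22 ρ r).IsHermitian := by
  ext i j
  fin_cases i <;> fin_cases j <;> rfl

theorem det_bivariatePoweredExponential_zero_sub {σ1 σ2 s11 s12 s22 α11 α12 α22 : ℝ}
    (hα11 : α11 ≠ 0) (hα12 : α12 ≠ 0) (hα22 : α22 ≠ 0) (ρ r : ℝ) :
    (bivariatePoweredExponential σ1 σ2 s11 s12 s22 α11 α12 α22 ρ 0 -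
        bivariatePoweredExponential σ1 σ2 s11 s12 s22 α11 α12 α22 ρ r).det =
      (σ1 * σ2) ^ 2 * ((1 - exp (-(s11 * r) ^ α11)) * (1 - exp (-(s22 * r) ^ α22)) -
        ρ ^ 2 * (1 - exp (-(s12 * r) ^ α12)) ^ 2) := by
  simp only [bivariatePoweredExponential, mul_zero, zero_rpow hα11, zero_rpow hα12,
    zero_rpow hα22, neg_zero, exp_zero, mul_one, Matrix.sub_apply, det_fin_two, of_apply, cons_val',
    cons_val_zero, cons_val_one, empty_val', cons_val_fin_one]
  ring

theorem one_sub_exp_neg_rpow_le {s r : ℝ} (hs : 0 ≤ s) (hr : 0 ≤ r) (α : ℝ) :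
    1 - exp (-(s * r) ^ α) ≤ s ^ α * r ^ α := by
  rw [← mul_rpow hs hr]
  linarith [one_sub_le_exp_neg ((s * r) ^ α)]

theorem one_sub_exp_neg_nonneg {t : ℝ} (ht : 0 ≤ t) : 0 ≤ 1 - exp (-t) :=
  sub_nonneg.2 (exp_le_one_iff.2 (neg_nonpos.2 ht))

theorem sq_mul_rpow_sq_le_of_one_sub_exp_neg_le {ρ s11 s12 s22 α11 α12 α22 r : ℝ}
    (hs11 : 0 ≤ s11) (hs12 : 0 ≤ s12) (hs22 : 0 ≤ s22) (hr : 0 < r)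
    (h : ρ ^ 2 * (1 - exp (-(s12 * r) ^ α12)) ^ 2 ≤
      (1 - exp (-(s11 * r) ^ α11)) * (1 - exp (-(s22 * r) ^ α22))) :
    ρ ^ 2 * (s12 ^ α12) ^ 2 ≤
      exp (2 * (s12 * r) ^ α12) * (s11 ^ α11 * s22 ^ α22) * r ^ (α11 + α22 - 2 * α12) := by
  set t := (s12 * r) ^ α12
  have ht : t = s12 ^ α12 * r ^ α12 := mul_rpow hs12 hr.le
  have hlow : ρ ^ 2 * (t * exp (-t)) ^ 2 ≤ s11 ^ α11 * s22 ^ α22 * r ^ (α11 + α22) := calc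
    ρ ^ 2 * (t * exp (-t)) ^ 2 ≤ ρ ^ 2 * (1 - exp (-t)) ^ 2 := by
      have := mul_exp_neg_le_one_sub_exp_neg t
      gcongr
    _ ≤ (1 - exp (-(s11 * r) ^ α11)) * (1 - exp (-(s22 * r) ^ α22)) := h
    _ ≤ (s11 ^ α11 * r ^ α11) * (s22 ^ α22 * r ^ α22) :=
      mul_le_mul (one_sub_exp_neg_rpow_le hs11 hr.le α11)
        (one_sub_exp_neg_rpow_le hs22 hr.le α22) (one_sub_exp_neg_nonneg (by positivity))
        (by positivity)
    _ = s11 ^ α11 * s22 ^ α22 * r ^ (α11 + α22) := by rw [rpow_add hr]; ring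
  have hsplit : r ^ (α11 + α22) = (r ^ α12) ^ 2 * r ^ (α11 + α22 - 2 * α12) := by
    rw [← rpow_natCast, ← rpow_mul hr.le, ← rpow_add hr]; congr 1; push_cast; ring
  have hexp : exp (-t) ^ 2 * exp (2 * t) = 1 := by
    rw [← exp_nat_mul, ← exp_add]; simp
  refine le_of_mul_le_mul_right ?_ (by positivity : 0 < (r ^ α12) ^ 2)
  calc ρ ^ 2 * (s12 ^ α12) ^ 2 * (r ^ α12) ^ 2
      = exp (2 * t) * (ρ ^ 2 * (t * exp (-t)) ^ 2) := by
        linear_combination (-ρ ^ 2 * (t + s12 ^ α12 * r ^ α12)) * ht - ρ ^ 2 * t ^ 2 * hexp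
    _ ≤ exp (2 * t) * (s11 ^ α11 * s22 ^ α22 * r ^ (α11 + α22)) := by gcongr
    _ = _ := by rw [hsplit]; ring

theorem eq_zero_of_forall_sq_mul_one_sub_exp_neg_sq_le {ρ s11 s12 s22 α11 α12 α22 : ℝ}
    (hs11 : 0 ≤ s11) (hs12 : 0 < s12) (hs22 : 0 ≤ s22) (hα12 : 0 ≤ α12)
    (hlt : 2 * α12 < α11 + α22)
    (h : ∀ r > 0, ρ ^ 2 * (1 - exp (-(s12 * r) ^ α12)) ^ 2 ≤
      (1 - exp (-(s11 * r) ^ α11)) * (1 - exp (-(s22 * r) ^ α22))) :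
    ρ = 0 := by
  set ε := α11 + α22 - 2 * α12
  have hε : 0 < ε := by linarith
  set f := fun r : ℝ => exp (2 * (s12 * r) ^ α12) * (s11 ^ α11 * s22 ^ α22) * r ^ ε
  have hf : ContinuousAt f 0 :=
    ((((continuousAt_id.const_mul s12).rpow_const (Or.inr hα12)).const_mul 2).rexp.mul
      continuousAt_const).mul (continuousAt_id.rpow_const (Or.inr hε.le))
  have hlim : Tendsto f (𝓝[>] 0) (𝓝 0) := by
    simpa [f, zero_rpow hε.ne'] using hf.tendsto.mono_left nhdsWithin_le_nhds
  have hnonpos : ρ ^ 2 * (s12 ^ α12) ^ 2 ≤ 0 :=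
    ge_of_tendsto hlim <| eventually_nhdsWithin_of_forall fun r hr =>
      sq_mul_rpow_sq_le_of_one_sub_exp_neg_le hs11 hs12.le hs22 hr (h r hr)
  have hρ2 : ρ ^ 2 = 0 :=
    le_antisymm (nonpos_of_mul_nonpos_left hnonpos (by positivity)) (sq_nonneg ρ)
  exact pow_eq_zero_iff two_ne_zero |>.1 hρ2

theorem bivariate_powered_exponential_necessary_general
    (n : ℕ) (hn : 1 ≤ n)
    (σ1 σ2 s11 s12 s22 α11 α12 α22 ρ : ℝ)
    (hσ1 : 0 < σ1) (hσ2 : 0 < σ2)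
    (hs11 : 0 < s11) (hs12 : 0 < s12) (hs22 : 0 < s22)
    (hα11 : α11 ∈ Ioc (0 : ℝ) 1) (hα22 : α22 ∈ Ioc (0 : ℝ) 1)
    (hα12 : α12 ∈ Ioc (0 : ℝ) 2)
    (hlt : α12 < (α11 + α22) / 2)
    (hpd : PosDefIn n (fun r =>
      !![σ1 ^ 2 * Real.exp (-(s11 * r) ^ α11), ρ * σ1 * σ2 * Real.exp (-(s12 * r) ^ α12);
         ρ * σ1 * σ2 * Real.exp (-(s12 * r) ^ α12), σ2 ^ 2 * Real.exp (-(s22 * r) ^ α22)])) :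
    ρ = 0 := by
  have hC : PosDefIn n (bivariatePoweredExponential σ1 σ2 s11 s12 s22 α11 α12 α22 ρ) := hpd
  have hdet : ∀ r > 0, ρ ^ 2 * (1 - exp (-(s12 * r) ^ α12)) ^ 2 ≤
      (1 - exp (-(s11 * r) ^ α11)) * (1 - exp (-(s22 * r) ^ α22)) := fun r hr => by
    have h := (hC.posSemidef_sub hn (fun _ => bivariatePoweredExponential_isHermitian ..)
      hr.le).det_nonneg
    rw [det_bivariatePoweredExponential_zero_sub hα11.1.ne' hα12.1.ne' hα22.1.ne'] at h
    exact sub_nonneg.1 (nonneg_of_mul_nonneg_right h (by positivity))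
  exact eq_zero_of_forall_sq_mul_one_sub_exp_neg_sq_le hs11.le hs12 hs22.le hα12.1.le
    (by linarith) hdet

/-- If `α12 < (α11 + α22)/2` then the bivariate powered exponential model is a valid
covariance model in `ℝⁿ` only for `ρ = 0`. -/
theorem bivariate_powered_exponential_necessary
    (n : ℕ) (hn : 1 ≤ n)
    (σ1 σ2 s11 s12 s22 α11 α12 α22 ρ : ℝ)
    (hσ1 : 0 < σ1) (hσ2 : 0 < σ2)
    (hs11 : 0 < s11) (hs12 : 0 < s12) (hs22 : 0 < s22)
    (hα11 : α11 ∈ Ioc (0 : ℝ) 1) (hα22 : α22 ∈ Ioc (0 : ℝ) 1)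
    (hα12 : α12 ∈ Ioc (0 : ℝ) 2)
    (hρ : ρ ∈ Icc (-1 : ℝ) 1)
    (hlt : α12 < (α11 + α22) / 2)
    (hpd : PosDefIn n (fun r =>
      !![σ1 ^ 2 * Real.exp (-(s11 * r) ^ α11), ρ * σ1 * σ2 * Real.exp (-(s12 * r) ^ α12);
         ρ * σ1 * σ2 * Real.exp (-(s12 * r) ^ α12), σ2 ^ 2 * Real.exp (-(s22 * r) ^ α22)])) :
    ρ = 0 :=
  bivariate_powered_exponential_necessary_general n hn σ1 σ2 s11 s12 s22 α11 α12 α22 ρ hσ1 hσ2 hs11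
    hs12 hs22 hα11 hα22 hα12 hlt hpd
end
end

section
/- Let n ≥ 1 be a natural number and consider the bivariate generalized Cauchy model C with parameters σ1, σ2 > 0, s11, s12, s22 > 0, α11, α22 ∈ (0,1], α12 ∈ (0,2], β11, β12, β22 > 0, ρ ∈ [−1,1]. If α12 < (α11 + α22)/2 and C is positive definite in ℝⁿ, then ρ = 0. -/
/-!
Put the two points `0` and `x` with `‖x‖ = r` and give them the vectors `v` and `-v`:
positive definiteness says that `C(0) - C(r)` is positive semidefinite, so its determinant is
nonnegative, i.e. `ρ² (1 - φ₁₂(r))² ≤ (1 - φ₁₁(r)) (1 - φ₂₂(r))` for the three correlation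
functions `φᵢⱼ`. Near `r = 0` each `1 - φᵢⱼ(r)` is of exact order `r ^ αᵢⱼ`, because
`γ (u - 1) / u ^ (γ + 1) ≤ 1 - u ^ (-γ) ≤ γ (u - 1)` (both from `exp t ≥ 1 + t`), so
`ρ² ≲ r ^ (α₁₁ + α₂₂ - 2 α₁₂)`, which tends to `0` when `α₁₂ < (α₁₁ + α₂₂) / 2`.
-/

open Matrix Set

noncomputable section

open Filter Topology Real

namespace Real

theorem one_sub_rpow_neg_le {u γ : ℝ} (hu : 0 < u) (hγ : 0 ≤ γ) :
    1 - u ^ (-γ) ≤ γ * (u - 1) := by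
  have hexp : 1 - γ * log u ≤ u ^ (-γ) := by
    rw [rpow_def_of_pos hu]
    linarith [add_one_le_exp (log u * -γ)]
  nlinarith [log_le_sub_one_of_pos hu]

theorem mul_sub_one_div_rpow_le_one_sub_rpow_neg {u γ : ℝ} (hu : 0 < u) (hγ : 0 ≤ γ) :
    γ * (u - 1) / u ^ (γ + 1) ≤ 1 - u ^ (-γ) := by
  have hexp : γ * log u + 1 ≤ u ^ γ := by
    rw [rpow_def_of_pos hu, mul_comm]
    exact add_one_le_exp _
  have hlog : γ * (1 - u⁻¹) ≤ γ * log u :=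
    mul_le_mul_of_nonneg_left (one_sub_inv_le_log_of_pos hu) hγ
  calc γ * (u - 1) / u ^ (γ + 1) = γ * (1 - u⁻¹) * u ^ (-γ) := by
        rw [rpow_add hu, rpow_one, rpow_neg hu.le]
        field_simp
    _ ≤ (u ^ γ - 1) * u ^ (-γ) :=
        mul_le_mul_of_nonneg_right (by linarith) (rpow_nonneg hu.le _)
    _ = 1 - u ^ (-γ) := by
        rw [sub_mul, ← rpow_add hu, add_neg_cancel, rpow_zero, one_mul]

end Real

theorem nonpos_of_forall_le_mul_rpow {a K ε δ : ℝ} (hε : 0 < ε) (hδ : 0 < δ)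
    (h : ∀ r, 0 < r → r ≤ δ → a ≤ K * r ^ ε) : a ≤ 0 := by
  have hlim : Tendsto (fun r : ℝ => K * r ^ ε) (𝓝[>] 0) (𝓝 0) := by
    have := ((continuousAt_rpow_const 0 ε (Or.inr hε.le)).tendsto.mono_left
      (nhdsWithin_le_nhds (s := Ioi 0))).const_mul K
    simpa [zero_rpow hε.ne'] using this
  refine ge_of_tendsto hlim ?_
  filter_upwards [Ioo_mem_nhdsGT hδ] with r hr using h r hr.1 hr.2.le

theorem sq_le_mul_rpow_of_variogram_bounds {ρ g₁ g₂ g₁₂ A₁ A₂ B α₁ α₂ α₁₂ r : ℝ}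
    (hr : 0 < r) (hB : 0 < B) (h : ρ ^ 2 * g₁₂ ^ 2 ≤ g₁ * g₂) (hg₁ : 0 ≤ g₁) (hg₂ : 0 ≤ g₂)
    (h₁ : g₁ ≤ A₁ * r ^ α₁) (h₂ : g₂ ≤ A₂ * r ^ α₂) (h₁₂ : B * r ^ α₁₂ ≤ g₁₂) :
    ρ ^ 2 ≤ A₁ * A₂ / B ^ 2 * r ^ (α₁ + α₂ - 2 * α₁₂) := by
  have hx : 0 < B * r ^ α₁₂ := by positivity
  calc ρ ^ 2 = ρ ^ 2 * (B * r ^ α₁₂) ^ 2 / (B * r ^ α₁₂) ^ 2 := by field_simp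
    _ ≤ g₁ * g₂ / (B * r ^ α₁₂) ^ 2 := by
        gcongr ?_ / _
        exact (mul_le_mul_of_nonneg_left (pow_le_pow_left₀ hx.le h₁₂ 2) (sq_nonneg ρ)).trans h
    _ ≤ A₁ * r ^ α₁ * (A₂ * r ^ α₂) / (B * r ^ α₁₂) ^ 2 := by
        gcongr
        · exact hg₁.trans h₁
    _ = A₁ * A₂ / B ^ 2 * r ^ (α₁ + α₂ - 2 * α₁₂) := by
        have hsq : r ^ (2 * α₁₂) = (r ^ α₁₂) ^ 2 := by
          rw [mul_comm]; exact_mod_cast rpow_mul_natCast hr.le α₁₂ 2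
        rw [rpow_sub hr, rpow_add hr, hsq]
        field_simp

def cauchyCorrelation (s α β r : ℝ) : ℝ := (1 + (s * r) ^ α) ^ (-(β / α))

section cauchyCorrelation

variable {s α β r : ℝ}

theorem cauchyCorrelation_zero (hα : α ≠ 0) : cauchyCorrelation s α β 0 = 1 := by
  simp [cauchyCorrelation, zero_rpow hα]

theorem cauchyCorrelation_le_one (hs : 0 ≤ s) (hr : 0 ≤ r) (hα : 0 ≤ α) (hβ : 0 ≤ β) :
    cauchyCorrelation s α β r ≤ 1 :=
  rpow_le_one_of_one_le_of_nonpos (le_add_of_nonneg_right (rpow_nonneg (mul_nonneg hs hr) _))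
    (neg_nonpos.2 (div_nonneg hβ hα))

theorem one_sub_cauchyCorrelation_le (hs : 0 ≤ s) (hr : 0 ≤ r) (hα : 0 ≤ α) (hβ : 0 ≤ β) :
    1 - cauchyCorrelation s α β r ≤ β / α * s ^ α * r ^ α := by
  have h := one_sub_rpow_neg_le (u := 1 + (s * r) ^ α) (by positivity) (div_nonneg hβ hα)
  rw [add_sub_cancel_left, mul_rpow hs hr, ← mul_assoc] at h
  rwa [cauchyCorrelation, mul_rpow hs hr]

theorem le_one_sub_cauchyCorrelation (hs : 0 ≤ s) (hr : 0 ≤ r) (hsr : s * r ≤ 1) (hα : 0 ≤ α)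
    (hβ : 0 ≤ β) :
    β / α / 2 ^ (β / α + 1) * s ^ α * r ^ α ≤ 1 - cauchyCorrelation s α β r := by
  have hx : 0 ≤ (s * r) ^ α := rpow_nonneg (mul_nonneg hs hr) _
  have hx1 : (s * r) ^ α ≤ 1 := rpow_le_one (mul_nonneg hs hr) hsr hα
  have hγ : 0 ≤ β / α := div_nonneg hβ hα
  calc β / α / 2 ^ (β / α + 1) * s ^ α * r ^ α = β / α * (s * r) ^ α / 2 ^ (β / α + 1) := by
        rw [mul_rpow hs hr]; ring
    _ ≤ β / α * (s * r) ^ α / (1 + (s * r) ^ α) ^ (β / α + 1) := by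
        gcongr
        linarith
    _ = β / α * ((1 + (s * r) ^ α) - 1) / (1 + (s * r) ^ α) ^ (β / α + 1) := by
        rw [add_sub_cancel_left]
    _ ≤ 1 - cauchyCorrelation s α β r :=
        mul_sub_one_div_rpow_le_one_sub_rpow_neg (by positivity) hγ

end cauchyCorrelation

namespace PosDefIn

variable {n : ℕ} {C : ℝ → Matrix (Fin 2) (Fin 2) ℝ}

theorem dotProduct_sub_mulVec_nonneg_s8 (hpd : PosDefIn n C) (hn : 1 ≤ n) {r : ℝ} (hr : 0 ≤ r)
    (v : Fin 2 → ℝ) : 0 ≤ v ⬝ᵥ (C 0 - C r) *ᵥ v := by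
  have h := hpd 2 ![0, EuclideanSpace.single ⟨0, hn⟩ r] ![v, -v]
  simp only [Fin.sum_univ_two, cons_val_zero, cons_val_one, sub_self, sub_zero, zero_sub,
    norm_zero, norm_neg, PiLp.norm_single, norm_eq_abs, abs_of_nonneg hr, mulVec_neg,
    dotProduct_neg, neg_dotProduct, neg_neg] at h
  rw [sub_mulVec, dotProduct_sub, sub_nonneg]
  linarith

theorem posSemidef_sub_s8 (hpd : PosDefIn n C) (hn : 1 ≤ n) (hC : ∀ r, (C r).IsHermitian)
    {r : ℝ} (hr : 0 ≤ r) : (C 0 - C r).PosSemidef :=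
  .of_dotProduct_mulVec_nonneg ((hC 0).sub (hC r)) fun v => by
    simpa using hpd.dotProduct_sub_mulVec_nonneg_s8 hn hr v

theorem sq_mul_one_sub_sq_le {f₁ f₂ f₁₂ : ℝ → ℝ} {σ₁ σ₂ ρ r : ℝ}
    (hpd : PosDefIn n fun r =>
      !![σ₁ ^ 2 * f₁ r, ρ * σ₁ * σ₂ * f₁₂ r; ρ * σ₁ * σ₂ * f₁₂ r, σ₂ ^ 2 * f₂ r])
    (hn : 1 ≤ n) (hσ₁ : σ₁ ≠ 0) (hσ₂ : σ₂ ≠ 0) (h₁ : f₁ 0 = 1) (h₂ : f₂ 0 = 1) (h₁₂ : f₁₂ 0 = 1)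
    (hr : 0 ≤ r) : ρ ^ 2 * (1 - f₁₂ r) ^ 2 ≤ (1 - f₁ r) * (1 - f₂ r) := by
  have hC : ∀ r, (!![σ₁ ^ 2 * f₁ r, ρ * σ₁ * σ₂ * f₁₂ r;
      ρ * σ₁ * σ₂ * f₁₂ r, σ₂ ^ 2 * f₂ r] : Matrix (Fin 2) (Fin 2) ℝ).IsHermitian := fun r => by
    ext i j; fin_cases i <;> fin_cases j <;> rfl
  have hdet := (hpd.posSemidef_sub_s8 hn hC hr).det_nonneg
  simp only [det_fin_two, Matrix.sub_apply, of_apply, cons_val', cons_val_zero, cons_val_one,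
    cons_val_fin_one, h₁, h₂, h₁₂] at hdet
  have hfactor : 0 ≤ (σ₁ * σ₂) ^ 2 * ((1 - f₁ r) * (1 - f₂ r) - ρ ^ 2 * (1 - f₁₂ r) ^ 2) := by
    linarith
  linarith [nonneg_of_mul_nonneg_right hfactor (by positivity)]

end PosDefIn

theorem bivariate_generalized_cauchy_necessary_alpha_general
    (n : ℕ) (hn : 1 ≤ n)
    (σ1 σ2 s11 s12 s22 α11 α12 α22 β11 β12 β22 ρ : ℝ)
    (hσ1 : 0 < σ1) (hσ2 : 0 < σ2)
    (hs11 : 0 < s11) (hs12 : 0 < s12) (hs22 : 0 < s22)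
    (hα11 : α11 ∈ Ioc (0 : ℝ) 1) (hα22 : α22 ∈ Ioc (0 : ℝ) 1)
    (hα12 : α12 ∈ Ioc (0 : ℝ) 2)
    (hβ11 : 0 < β11) (hβ12 : 0 < β12) (hβ22 : 0 < β22)
    (hlt : α12 < (α11 + α22) / 2)
    (hpd : PosDefIn n (fun r =>
      !![σ1 ^ 2 * (1 + (s11 * r) ^ α11) ^ (-(β11 / α11)),
         ρ * σ1 * σ2 * (1 + (s12 * r) ^ α12) ^ (-(β12 / α12));
         ρ * σ1 * σ2 * (1 + (s12 * r) ^ α12) ^ (-(β12 / α12)),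
         σ2 ^ 2 * (1 + (s22 * r) ^ α22) ^ (-(β22 / α22))])) :
    ρ = 0 := by
  obtain ⟨hα11, -⟩ := hα11
  obtain ⟨hα22, -⟩ := hα22
  obtain ⟨hα12, -⟩ := hα12
  have hdet : ∀ r, 0 ≤ r → ρ ^ 2 * (1 - cauchyCorrelation s12 α12 β12 r) ^ 2 ≤
      (1 - cauchyCorrelation s11 α11 β11 r) * (1 - cauchyCorrelation s22 α22 β22 r) :=
    fun r hr => hpd.sq_mul_one_sub_sq_le hn hσ1.ne' hσ2.ne' (cauchyCorrelation_zero hα11.ne')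
      (cauchyCorrelation_zero hα22.ne') (cauchyCorrelation_zero hα12.ne') hr
  have hρ : ρ ^ 2 ≤ 0 := by
    apply nonpos_of_forall_le_mul_rpow (by linarith : 0 < α11 + α22 - 2 * α12) (one_div_pos.2 hs12)
    intro r hr hrs
    have hsr : s12 * r ≤ 1 := (le_div_iff₀' hs12).1 hrs
    refine sq_le_mul_rpow_of_variogram_bounds hr (by positivity) (hdet r hr.le) ?_ ?_
      (one_sub_cauchyCorrelation_le hs11.le hr.le hα11.le hβ11.le)
      (one_sub_cauchyCorrelation_le hs22.le hr.le hα22.le hβ22.le)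
      (le_one_sub_cauchyCorrelation hs12.le hr.le hsr hα12.le hβ12.le)
    · exact sub_nonneg.2 (cauchyCorrelation_le_one hs11.le hr.le hα11.le hβ11.le)
    · exact sub_nonneg.2 (cauchyCorrelation_le_one hs22.le hr.le hα22.le hβ22.le)
  exact pow_eq_zero_iff two_ne_zero |>.1 (le_antisymm hρ (sq_nonneg ρ))

/-- If `α12 < (α11 + α22)/2` then the bivariate generalized Cauchy model is a valid
covariance model in `ℝⁿ` only for `ρ = 0`. -/
theorem bivariate_generalized_cauchy_necessary_alpha
    (n : ℕ) (hn : 1 ≤ n)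
    (σ1 σ2 s11 s12 s22 α11 α12 α22 β11 β12 β22 ρ : ℝ)
    (hσ1 : 0 < σ1) (hσ2 : 0 < σ2)
    (hs11 : 0 < s11) (hs12 : 0 < s12) (hs22 : 0 < s22)
    (hα11 : α11 ∈ Ioc (0 : ℝ) 1) (hα22 : α22 ∈ Ioc (0 : ℝ) 1)
    (hα12 : α12 ∈ Ioc (0 : ℝ) 2)
    (hβ11 : 0 < β11) (hβ12 : 0 < β12) (hβ22 : 0 < β22)
    (hρ : ρ ∈ Icc (-1 : ℝ) 1)
    (hlt : α12 < (α11 + α22) / 2)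
    (hpd : PosDefIn n (fun r =>
      !![σ1 ^ 2 * (1 + (s11 * r) ^ α11) ^ (-(β11 / α11)),
         ρ * σ1 * σ2 * (1 + (s12 * r) ^ α12) ^ (-(β12 / α12));
         ρ * σ1 * σ2 * (1 + (s12 * r) ^ α12) ^ (-(β12 / α12)),
         σ2 ^ 2 * (1 + (s22 * r) ^ α22) ^ (-(β22 / α22))])) :
    ρ = 0 :=
  bivariate_generalized_cauchy_necessary_alpha_general n hn σ1 σ2 s11 s12 s22 α11 α12 α22 β11 β12
    β22 ρ hσ1 hσ2 hs11 hs12 hs22 hα11 hα22 hα12 hβ11 hβ12 hβ22 hlt hpd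
end
end

section
/- Let n ≥ 1 be a natural number and consider the bivariate generalized Cauchy model C with parameters σ1, σ2 > 0, s11, s12, s22 > 0, α11, α22 ∈ (0,1], α12 ∈ (0,2], β11, β12, β22 > 0, ρ ∈ [−1,1]. If β12 < (β11 + β22)/2, β11 < n, β12 < n, β22 < n, and C is positive definite in ℝⁿ, then ρ = 0. -/
open Matrix Set

noncomputable section

/-!
Test positive definiteness on the grid `{0,…,m-1}ⁿ` with the constant vectors `(1, t)`. Writing
`Sᵢⱼ(m)` for the sum of `(1 + (sᵢⱼ r) ^ αᵢⱼ) ^ (-βᵢⱼ/αᵢⱼ)` over all pairs of grid points at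
distance `r`, the resulting quadratic polynomial in `t` is nonnegative, and its discriminant gives
`ρ² S₁₂(m)² ≤ S₁₁(m) S₂₂(m)`. All distances are at most `√n m`, so `S₁₂(m) ≥ K m^(2n-β₁₂)`. For
`β < n` the sum of `max(r, 1) ^ (-β)` over the grid, seen from any grid point, is `O(m^(n-β))`:
bound `max(‖v‖, 1) ^ n` below by `∏ (|vᵈ| + 1) / 2` and sum coordinatewise. Hence
`Sᵢᵢ(m) = O(m^(2n-βᵢᵢ))` and `ρ² = O(m^(2β₁₂-β₁₁-β₂₂)) → 0`.
-/

open Finset Filter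

theorem Real.sub_one_rpow_le {x p : ℝ} (hx : 1 ≤ x) (hp0 : 0 ≤ p) (hp1 : p ≤ 1) :
    (x - 1) ^ p ≤ x ^ p - p * x ^ (p - 1) := by
  have hx0 : 0 < x := by linarith
  calc (x - 1) ^ p = x ^ p * (1 + -x⁻¹) ^ p := by
        rw [← Real.mul_rpow hx0.le (by linarith [inv_le_one_of_one_le₀ hx])]
        congr 1
        field_simp
        ring
    _ ≤ x ^ p * (1 + p * -x⁻¹) := by
        gcongr
        exact rpow_one_add_le_one_add_mul_self (by linarith [inv_le_one_of_one_le₀ hx]) hp0 hp1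
    _ = x ^ p - p * x ^ (p - 1) := by
        rw [Real.rpow_sub_one hx0.ne']
        ring

theorem sum_range_add_one_rpow_sub_one_le {p : ℝ} (hp0 : 0 < p) (hp1 : p ≤ 1) (m : ℕ) :
    ∑ u ∈ range m, ((u : ℝ) + 1) ^ (p - 1) ≤ (m : ℝ) ^ p / p := by
  rw [le_div_iff₀ hp0, sum_mul]
  calc ∑ u ∈ range m, ((u : ℝ) + 1) ^ (p - 1) * p
      ≤ ∑ u ∈ range m, ((((u + 1 : ℕ) : ℝ)) ^ p - (u : ℝ) ^ p) := by
        gcongr with u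
        have := Real.sub_one_rpow_le (x := (u : ℝ) + 1) (by simp) hp0.le hp1
        push_cast
        simp only [add_sub_cancel_right] at this
        linarith
    _ = (m : ℝ) ^ p := by
        rw [sum_range_sub (fun u : ℕ => (u : ℝ) ^ p)]
        simp [Real.zero_rpow hp0.ne']

theorem sum_range_abs_sub_le {g : ℝ → ℝ} (hg : ∀ x, 0 ≤ x → 0 ≤ g x) {k m : ℕ} (hk : k < m) :
    ∑ t ∈ range m, g |(t : ℝ) - k| ≤ 2 * ∑ u ∈ range m, g u := by
  set d : ℕ → ℕ := fun t => ((t : ℤ) - k).natAbs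
  have hd : ∀ t : ℕ, |(t : ℝ) - k| = d t := fun t => by simp [d, Nat.cast_natAbs]
  have hfiber : ∀ u, #{t ∈ range m | d t = u} ≤ 2 := by
    intro u
    refine (Finset.card_le_card fun t ht => ?_).trans (card_le_two (a := k + u) (b := k - u))
    simp only [Finset.mem_filter, d] at ht
    simp only [Finset.mem_insert, Finset.mem_singleton]
    omega
  calc ∑ t ∈ range m, g |(t : ℝ) - k|
      = ∑ u ∈ (range m).image d, #{t ∈ range m | d t = u} • g u := by
        simp only [hd]
        exact sum_comp (fun u : ℕ => g u) d
    _ ≤ ∑ u ∈ (range m).image d, 2 * g u := by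
        gcongr with u
        rw [nsmul_eq_mul]
        gcongr
        · exact hg _ u.cast_nonneg
        · exact_mod_cast hfiber u
    _ ≤ ∑ u ∈ range m, 2 * g u := by
        refine sum_le_sum_of_subset_of_nonneg ?_ fun u _ _ => by linarith [hg u u.cast_nonneg]
        intro u hu
        simp only [Finset.mem_image, Finset.mem_range, d] at hu ⊢
        omega
    _ = 2 * ∑ u ∈ range m, g u := (mul_sum ..).symm

theorem Matrix.sq_add_le_of_forall_dotProduct_mulVec_nonneg (M : Matrix (Fin 2) (Fin 2) ℝ)
    (hM : ∀ v, 0 ≤ v ⬝ᵥ M *ᵥ v) : (M 0 1 + M 1 0) ^ 2 ≤ 4 * M 0 0 * M 1 1 := by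
  have h := discrim_le_zero (a := M 1 1) (b := M 0 1 + M 1 0) (c := M 0 0) fun t => by
    have := hM ![1, t]
    simp only [dotProduct, mulVec, Fin.sum_univ_two, cons_val_zero, cons_val_one,
      cons_val_fin_one, mul_one, one_mul] at this
    linarith
  rw [discrim] at h
  linarith

namespace PosDefIn

variable {n : ℕ} {C : ℝ → Matrix (Fin 2) (Fin 2) ℝ}

theorem sum_nonneg (hC : PosDefIn n C) {ι : Type*} [Fintype ι]
    (x : ι → EuclideanSpace ℝ (Fin n)) (a : ι → Fin 2 → ℝ) :
    0 ≤ ∑ i, ∑ j, a i ⬝ᵥ C ‖x i - x j‖ *ᵥ a j := by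
  let e := Fintype.equivFin ι
  convert hC _ (x ∘ e.symm) (a ∘ e.symm) using 1
  refine Fintype.sum_equiv e _ _ fun i => Fintype.sum_equiv e _ _ fun j => ?_
  simp

theorem sq_add_sum_le (hC : PosDefIn n C) {ι : Type*} [Fintype ι]
    (x : ι → EuclideanSpace ℝ (Fin n)) :
    (∑ i, ∑ j, C ‖x i - x j‖ 0 1 + ∑ i, ∑ j, C ‖x i - x j‖ 1 0) ^ 2 ≤
      4 * (∑ i, ∑ j, C ‖x i - x j‖ 0 0) * ∑ i, ∑ j, C ‖x i - x j‖ 1 1 := by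
  simpa only [Matrix.sum_apply] using
    (∑ i, ∑ j, C ‖x i - x j‖).sq_add_le_of_forall_dotProduct_mulVec_nonneg fun v => by
      simpa only [sum_mulVec, dotProduct_sum] using hC.sum_nonneg x fun _ => v

end PosDefIn

def genCauchy (s α β r : ℝ) : ℝ := (1 + (s * r) ^ α) ^ (-(β / α))

section GenCauchy

variable {s α β r : ℝ}

theorem one_le_one_add_mul_rpow (hs : 0 ≤ s) (hr : 0 ≤ r) : 1 ≤ 1 + (s * r) ^ α := by
  linarith [Real.rpow_nonneg (mul_nonneg hs hr) α]

theorem genCauchy_nonneg (hs : 0 ≤ s) (hr : 0 ≤ r) : 0 ≤ genCauchy s α β r :=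
  Real.rpow_nonneg (zero_le_one.trans (one_le_one_add_mul_rpow hs hr)) _

theorem genCauchy_antitoneOn (hs : 0 ≤ s) (hα : 0 < α) (hβ : 0 ≤ β) :
    AntitoneOn (genCauchy s α β) (Ici 0) := fun r hr r' _ hrr' => by
  refine Real.rpow_le_rpow_of_nonpos (zero_lt_one.trans_le (one_le_one_add_mul_rpow hs hr)) ?_
    (neg_nonpos.2 (by positivity))
  gcongr
  exact mul_nonneg hs hr

theorem genCauchy_le_one (hs : 0 ≤ s) (hα : 0 < α) (hβ : 0 ≤ β) (hr : 0 ≤ r) :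
    genCauchy s α β r ≤ 1 :=
  Real.rpow_le_one_of_one_le_of_nonpos (one_le_one_add_mul_rpow hs hr)
    (neg_nonpos.2 (by positivity))

theorem genCauchy_le_rpow_neg (hα : 0 < α) (hβ : 0 ≤ β) (hsr : 0 < s * r) :
    genCauchy s α β r ≤ (s * r) ^ (-β) := by
  calc genCauchy s α β r ≤ ((s * r) ^ α) ^ (-(β / α)) :=
        Real.rpow_le_rpow_of_nonpos (by positivity) (by linarith) (neg_nonpos.2 (by positivity))
    _ = (s * r) ^ (-β) := by
        rw [← Real.rpow_mul hsr.le]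
        field_simp

theorem two_rpow_mul_rpow_neg_le_genCauchy (hα : 0 < α) (hβ : 0 ≤ β) (hsr : 1 ≤ s * r) :
    2 ^ (-(β / α)) * (s * r) ^ (-β) ≤ genCauchy s α β r := by
  have hsr0 : 0 ≤ s * r := zero_le_one.trans hsr
  calc 2 ^ (-(β / α)) * (s * r) ^ (-β) = (2 * (s * r) ^ α) ^ (-(β / α)) := by
        rw [Real.mul_rpow zero_le_two (by positivity), ← Real.rpow_mul hsr0]
        field_simp
    _ ≤ genCauchy s α β r := by
        refine Real.rpow_le_rpow_of_nonpos (by positivity) ?_ (neg_nonpos.2 (by positivity))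
        linarith [Real.one_le_rpow hsr hα.le]

theorem genCauchy_le_mul_max_rpow_neg (hs : 0 < s) (hα : 0 < α) (hβ : 0 ≤ β) (hr : 0 ≤ r) :
    genCauchy s α β r ≤ max 1 (s ^ (-β)) * max r 1 ^ (-β) := by
  rcases le_total r 1 with hr1 | hr1
  · rw [max_eq_right hr1, Real.one_rpow, mul_one]
    exact (genCauchy_le_one hs.le hα hβ hr).trans (le_max_left _ _)
  · rw [max_eq_left hr1]
    calc genCauchy s α β r ≤ s ^ (-β) * r ^ (-β) := by
          rw [← Real.mul_rpow hs.le hr]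
          exact genCauchy_le_rpow_neg hα hβ (by positivity)
      _ ≤ max 1 (s ^ (-β)) * r ^ (-β) := by gcongr; exact le_max_right _ _

end GenCauchy

theorem max_norm_one_rpow_neg_le_prod {n : ℕ} (hn : n ≠ 0) {β : ℝ} (hβ : 0 ≤ β)
    (v : EuclideanSpace ℝ (Fin n)) :
    max ‖v‖ 1 ^ (-β) ≤ 2 ^ β * ∏ d, (|v d| + 1) ^ (-(β / n)) := by
  have hn' : (n : ℝ) ≠ 0 := Nat.cast_ne_zero.2 hn
  have hθ : 0 ≤ β / n := by positivity
  have hfac : ∀ d, (|v d| + 1) / 2 ≤ max ‖v‖ 1 := fun d => by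
    have : |v d| ≤ ‖v‖ := PiLp.norm_apply_le v d
    linarith [le_max_left ‖v‖ 1, le_max_right ‖v‖ 1]
  have hpos : ∀ d, 0 < (|v d| + 1) / 2 := fun d => by positivity
  calc max ‖v‖ 1 ^ (-β) = (max ‖v‖ 1 ^ n) ^ (-(β / n)) := by
        rw [← Real.rpow_natCast, ← Real.rpow_mul (by positivity)]
        field_simp
    _ ≤ (∏ d, (|v d| + 1) / 2) ^ (-(β / n)) := by
        refine Real.rpow_le_rpow_of_nonpos (prod_pos fun d _ => hpos d) ?_ (by linarith)
        exact (prod_le_prod (fun d _ => (hpos d).le) fun d _ => hfac d).trans_eq (by simp)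
    _ = ∏ d, 2 ^ (β / n) * (|v d| + 1) ^ (-(β / n)) := by
        rw [← Real.finsetProd_rpow _ _ fun d _ => (hpos d).le]
        refine prod_congr rfl fun d _ => ?_
        rw [Real.div_rpow (by positivity) zero_le_two, Real.rpow_neg zero_le_two, div_inv_eq_mul,
          mul_comm]
    _ = 2 ^ β * ∏ d, (|v d| + 1) ^ (-(β / n)) := by
        rw [prod_mul_distrib, prod_const, card_univ, Fintype.card_fin, ← Real.rpow_natCast,
          ← Real.rpow_mul zero_le_two]
        field_simp

def gridPt (n m : ℕ) (k : Fin n → Fin m) : EuclideanSpace ℝ (Fin n) :=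
  WithLp.toLp 2 fun d => ((k d : ℕ) : ℝ)

def gridSum (n m : ℕ) (f : ℝ → ℝ) : ℝ :=
  ∑ k : Fin n → Fin m, ∑ l : Fin n → Fin m, f ‖gridPt n m k - gridPt n m l‖

section Grid

variable {n m : ℕ}

theorem norm_gridPt_sub_le (k l : Fin n → Fin m) :
    ‖gridPt n m k - gridPt n m l‖ ≤ √n * m := by
  rw [EuclideanSpace.norm_eq, ← Real.sqrt_sq (Nat.cast_nonneg m), ← Real.sqrt_mul n.cast_nonneg]
  gcongr
  calc ∑ d, ‖(gridPt n m k - gridPt n m l) d‖ ^ 2 ≤ ∑ _d : Fin n, (m : ℝ) ^ 2 := by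
        gcongr with d
        change |((k d : ℕ) : ℝ) - l d| ≤ m
        have hk : ((k d : ℕ) : ℝ) < m := by exact_mod_cast (k d).isLt
        have hl : ((l d : ℕ) : ℝ) < m := by exact_mod_cast (l d).isLt
        rw [abs_le]
        constructor <;> linarith [(k d : ℕ).cast_nonneg (α := ℝ), (l d : ℕ).cast_nonneg (α := ℝ)]
    _ = n * m ^ 2 := by simp

theorem gridSum_const_mul (m : ℕ) (c : ℝ) (f : ℝ → ℝ) :
    gridSum n m (fun r => c * f r) = c * gridSum n m f := by
  simp only [gridSum, mul_sum]

theorem gridSum_nonneg {f : ℝ → ℝ} (hf : ∀ r, 0 ≤ r → 0 ≤ f r) : 0 ≤ gridSum n m f :=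
  sum_nonneg fun _ _ => sum_nonneg fun _ _ => hf _ (norm_nonneg _)

theorem gridSum_mono {f g : ℝ → ℝ} (hfg : ∀ r, 0 ≤ r → f r ≤ g r) :
    gridSum n m f ≤ gridSum n m g :=
  sum_le_sum fun _ _ => sum_le_sum fun _ _ => hfg _ (norm_nonneg _)

theorem pow_mul_le_gridSum {f : ℝ → ℝ} (hf : AntitoneOn f (Ici 0)) :
    (m : ℝ) ^ (2 * n) * f (√n * m) ≤ gridSum n m f := by
  calc (m : ℝ) ^ (2 * n) * f (√n * m)
      = ∑ _k : Fin n → Fin m, ∑ _l : Fin n → Fin m, f (√n * m) := by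
        simp only [sum_const, card_univ, Fintype.card_fun, Fintype.card_fin, nsmul_eq_mul]
        push_cast
        ring
    _ ≤ gridSum n m f :=
        sum_le_sum fun k _ => sum_le_sum fun l _ =>
          hf (norm_nonneg _) (mem_Ici.2 (by positivity)) (norm_gridPt_sub_le k l)

theorem sum_max_norm_gridPt_sub_rpow_neg_le {β : ℝ} (hβ : 0 ≤ β) (hβn : β < n)
    (k : Fin n → Fin m) :
    ∑ l, max ‖gridPt n m k - gridPt n m l‖ 1 ^ (-β) ≤
      2 ^ β * (2 / (1 - β / n)) ^ n * (m : ℝ) ^ (n - β) := by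
  have hn : (0 : ℝ) < n := hβ.trans_lt hβn
  set θ := β / n with hθ
  have hθ0 : 0 ≤ θ := by positivity
  have hθ1 : 0 < 1 - θ := by rw [sub_pos, div_lt_one hn]; exact hβn
  have hline : ∀ d, ∑ t : Fin m, (|((k d : ℕ) : ℝ) - t| + 1) ^ (-θ) ≤
      2 * ((m : ℝ) ^ (1 - θ) / (1 - θ)) := fun d => by
    rw [Fin.sum_univ_eq_sum_range (fun t => (|((k d : ℕ) : ℝ) - t| + 1) ^ (-θ))]
    simp_rw [abs_sub_comm ((k d : ℕ) : ℝ)]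
    refine (sum_range_abs_sub_le (g := fun x => (x + 1) ^ (-θ))
      (fun x hx => Real.rpow_nonneg (by positivity) _) (k d).isLt).trans ?_
    gcongr
    simpa only [sub_sub_cancel_left] using
      sum_range_add_one_rpow_sub_one_le hθ1 (by linarith) m
  calc ∑ l, max ‖gridPt n m k - gridPt n m l‖ 1 ^ (-β)
      ≤ ∑ l : Fin n → Fin m, 2 ^ β * ∏ d, (|((k d : ℕ) : ℝ) - l d| + 1) ^ (-θ) :=
        sum_le_sum fun l _ => max_norm_one_rpow_neg_le_prod (Nat.cast_ne_zero.1 hn.ne') hβ _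
    _ = 2 ^ β * ∏ d, ∑ t : Fin m, (|((k d : ℕ) : ℝ) - t| + 1) ^ (-θ) := by
        rw [← mul_sum, Fintype.prod_sum]
    _ ≤ 2 ^ β * ∏ _d : Fin n, 2 * ((m : ℝ) ^ (1 - θ) / (1 - θ)) := by
        gcongr with d
        exact hline d
    _ = 2 ^ β * (2 / (1 - β / n)) ^ n * (m : ℝ) ^ (n - β) := by
        rw [prod_const, card_univ, Fintype.card_fin, mul_div_left_comm, mul_pow,
          ← Real.rpow_natCast ((m : ℝ) ^ (1 - θ)), ← Real.rpow_mul m.cast_nonneg, mul_assoc,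
          show (1 - θ) * n = n - β by rw [hθ]; field_simp]
        ring

theorem gridSum_max_one_rpow_neg_le {β : ℝ} (hβ : 0 ≤ β) (hβn : β < n) :
    gridSum n m (fun r => max r 1 ^ (-β)) ≤
      2 ^ β * (2 / (1 - β / n)) ^ n * (m : ℝ) ^ (2 * n - β) := by
  calc gridSum n m (fun r => max r 1 ^ (-β))
      ≤ ∑ _k : Fin n → Fin m, 2 ^ β * (2 / (1 - β / n)) ^ n * (m : ℝ) ^ (n - β) :=
        sum_le_sum fun k _ => sum_max_norm_gridPt_sub_rpow_neg_le hβ hβn k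
    _ = 2 ^ β * (2 / (1 - β / n)) ^ n * (m : ℝ) ^ (2 * n - β) := by
        rw [sum_const, card_univ, Fintype.card_fun, Fintype.card_fin, Fintype.card_fin,
          nsmul_eq_mul, Nat.cast_pow, ← Real.rpow_natCast, mul_left_comm,
          ← Real.rpow_add' m.cast_nonneg (by linarith)]
        ring_nf

section Asymptotics

variable {n : ℕ} {s α β : ℝ}

theorem exists_gridSum_genCauchy_le (hs : 0 < s) (hα : 0 < α) (hβ : 0 ≤ β) (hβn : β < n) :
    ∃ D, ∀ m, gridSum n m (genCauchy s α β) ≤ D * (m : ℝ) ^ (2 * n - β) := by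
  refine ⟨max 1 (s ^ (-β)) * (2 ^ β * (2 / (1 - β / n)) ^ n), fun m => ?_⟩
  calc gridSum n m (genCauchy s α β)
      ≤ gridSum n m (fun r => max 1 (s ^ (-β)) * max r 1 ^ (-β)) :=
        gridSum_mono fun r hr => genCauchy_le_mul_max_rpow_neg hs hα hβ hr
    _ ≤ _ := by
        rw [gridSum_const_mul, mul_assoc]
        gcongr
        exact gridSum_max_one_rpow_neg_le hβ hβn

theorem exists_pos_mul_le_gridSum_genCauchy (hn : 0 < n) (hs : 0 < s) (hα : 0 < α)
    (hβ : 0 ≤ β) :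
    ∃ K > 0, ∀ᶠ m : ℕ in atTop, K * (m : ℝ) ^ (2 * n - β) ≤ gridSum n m (genCauchy s α β) := by
  have hsn : 0 < s * √n := by positivity
  refine ⟨2 ^ (-(β / α)) * (s * √n) ^ (-β), by positivity, ?_⟩
  filter_upwards [eventually_ge_atTop ⌈(s * √n)⁻¹⌉₊, eventually_gt_atTop 0] with m hm hm0
  have hm0' : (0 : ℝ) < m := Nat.cast_pos.2 hm0
  have hbig : 1 ≤ s * (√n * m) := by
    rw [← mul_assoc, ← inv_mul_le_iff₀ hsn, mul_one]
    exact Nat.ceil_le.1 hm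
  calc 2 ^ (-(β / α)) * (s * √n) ^ (-β) * (m : ℝ) ^ (2 * n - β)
      = (m : ℝ) ^ (2 * n) * (2 ^ (-(β / α)) * (s * (√n * m)) ^ (-β)) := by
        rw [← mul_assoc s, Real.mul_rpow hsn.le hm0'.le, Real.rpow_sub hm0', Real.rpow_neg hm0'.le,
          show (2 * n : ℝ) = (2 * n : ℕ) by push_cast; ring, Real.rpow_natCast]
        field_simp
    _ ≤ (m : ℝ) ^ (2 * n) * genCauchy s α β (√n * m) := by
        gcongr
        exact two_rpow_mul_rpow_neg_le_genCauchy hα hβ hbig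
    _ ≤ gridSum n m (genCauchy s α β) := pow_mul_le_gridSum (genCauchy_antitoneOn hs.le hα hβ)

end Asymptotics

theorem eq_zero_of_eventually_sq_mul_le {x K D a b : ℝ} (hK : K ≠ 0) (hb : b < 2 * a)
    (h : ∀ᶠ m : ℕ in atTop, x ^ 2 * (K * (m : ℝ) ^ a) ^ 2 ≤ D * (m : ℝ) ^ b) : x = 0 := by
  have hlim : Tendsto (fun m : ℕ => D / K ^ 2 * (m : ℝ) ^ (b - 2 * a)) atTop (nhds 0) := by
    simpa using ((tendsto_rpow_neg_atTop (by linarith : 0 < 2 * a - b)).comp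
      tendsto_natCast_atTop_atTop).const_mul (D / K ^ 2)
  refine pow_eq_zero_iff two_ne_zero |>.1 (le_antisymm (ge_of_tendsto hlim ?_) (sq_nonneg x))
  filter_upwards [h, eventually_gt_atTop 0] with m hm hm0
  have hm0' : (0 : ℝ) < m := Nat.cast_pos.2 hm0
  rw [Real.rpow_sub hm0', div_mul_div_comm, le_div_iff₀ (by positivity)]
  calc x ^ 2 * (K ^ 2 * (m : ℝ) ^ (2 * a)) = x ^ 2 * (K * (m : ℝ) ^ a) ^ 2 := by
        rw [mul_pow, ← Real.rpow_mul_natCast hm0'.le]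
        ring_nf
    _ ≤ D * (m : ℝ) ^ b := hm

theorem bivariate_generalized_cauchy_necessary_beta_general
    (n : ℕ) (hn : 1 ≤ n)
    (σ1 σ2 s11 s12 s22 α11 α12 α22 β11 β12 β22 ρ : ℝ)
    (hσ1 : 0 < σ1) (hσ2 : 0 < σ2)
    (hs11 : 0 < s11) (hs12 : 0 < s12) (hs22 : 0 < s22)
    (hα11 : α11 ∈ Ioc (0 : ℝ) 1) (hα22 : α22 ∈ Ioc (0 : ℝ) 1)
    (hα12 : α12 ∈ Ioc (0 : ℝ) 2)
    (hβ11 : 0 < β11) (hβ12 : 0 < β12) (hβ22 : 0 < β22)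
    (hlt : β12 < (β11 + β22) / 2)
    (hβ11n : β11 < (n : ℝ)) (hβ22n : β22 < (n : ℝ))
    (hpd : PosDefIn n (fun r =>
      !![σ1 ^ 2 * (1 + (s11 * r) ^ α11) ^ (-(β11 / α11)),
         ρ * σ1 * σ2 * (1 + (s12 * r) ^ α12) ^ (-(β12 / α12));
         ρ * σ1 * σ2 * (1 + (s12 * r) ^ α12) ^ (-(β12 / α12)),
         σ2 ^ 2 * (1 + (s22 * r) ^ α22) ^ (-(β22 / α22))])) :
    ρ = 0 := by
  have hCS : ∀ m, ρ ^ 2 * gridSum n m (genCauchy s12 α12 β12) ^ 2 ≤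
      gridSum n m (genCauchy s11 α11 β11) * gridSum n m (genCauchy s22 α22 β22) := fun m => by
    have h : (gridSum n m (fun r => ρ * σ1 * σ2 * genCauchy s12 α12 β12 r) +
        gridSum n m (fun r => ρ * σ1 * σ2 * genCauchy s12 α12 β12 r)) ^ 2 ≤
        4 * gridSum n m (fun r => σ1 ^ 2 * genCauchy s11 α11 β11 r) *
          gridSum n m (fun r => σ2 ^ 2 * genCauchy s22 α22 β22 r) :=
      hpd.sq_add_sum_le (gridPt n m)
    simp only [gridSum_const_mul] at h
    refine le_of_mul_le_mul_left ?_ (by positivity : 0 < 4 * (σ1 * σ2) ^ 2)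
    linear_combination h
  obtain ⟨K, hK, hS12⟩ := exists_pos_mul_le_gridSum_genCauchy hn hs12 hα12.1 hβ12.le
  obtain ⟨D11, hS11⟩ := exists_gridSum_genCauchy_le hs11 hα11.1 hβ11.le hβ11n
  obtain ⟨D22, hS22⟩ := exists_gridSum_genCauchy_le hs22 hα22.1 hβ22.le hβ22n
  refine eq_zero_of_eventually_sq_mul_le hK.ne' (a := 2 * n - β12) (D := D11 * D22)
    (b := (2 * n - β11) + (2 * n - β22)) (by linarith) ?_
  filter_upwards [hS12, eventually_gt_atTop 0] with m hm hm0
  calc ρ ^ 2 * (K * (m : ℝ) ^ (2 * n - β12)) ^ 2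
      ≤ ρ ^ 2 * gridSum n m (genCauchy s12 α12 β12) ^ 2 := by gcongr
    _ ≤ gridSum n m (genCauchy s11 α11 β11) * gridSum n m (genCauchy s22 α22 β22) := hCS m
    _ ≤ D11 * (m : ℝ) ^ (2 * n - β11) * (D22 * (m : ℝ) ^ (2 * n - β22)) :=
        mul_le_mul (hS11 m) (hS22 m) (gridSum_nonneg fun _ hr => genCauchy_nonneg hs22.le hr)
          ((gridSum_nonneg fun _ hr => genCauchy_nonneg hs11.le hr).trans (hS11 m))
    _ = D11 * D22 * (m : ℝ) ^ ((2 * n - β11) + (2 * n - β22)) := by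
        rw [Real.rpow_add (Nat.cast_pos.2 hm0)]
        ring

/-- If `β12 < (β11 + β22)/2` and `βᵢⱼ < n` then the bivariate generalized Cauchy model is a valid
covariance model in `ℝⁿ` only for `ρ = 0`. -/
theorem bivariate_generalized_cauchy_necessary_beta
    (n : ℕ) (hn : 1 ≤ n)
    (σ1 σ2 s11 s12 s22 α11 α12 α22 β11 β12 β22 ρ : ℝ)
    (hσ1 : 0 < σ1) (hσ2 : 0 < σ2)
    (hs11 : 0 < s11) (hs12 : 0 < s12) (hs22 : 0 < s22)
    (hα11 : α11 ∈ Ioc (0 : ℝ) 1) (hα22 : α22 ∈ Ioc (0 : ℝ) 1)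
    (hα12 : α12 ∈ Ioc (0 : ℝ) 2)
    (hβ11 : 0 < β11) (hβ12 : 0 < β12) (hβ22 : 0 < β22)
    (hρ : ρ ∈ Icc (-1 : ℝ) 1)
    (hlt : β12 < (β11 + β22) / 2)
    (hβ11n : β11 < (n : ℝ)) (hβ12n : β12 < (n : ℝ)) (hβ22n : β22 < (n : ℝ))
    (hpd : PosDefIn n (fun r =>
      !![σ1 ^ 2 * (1 + (s11 * r) ^ α11) ^ (-(β11 / α11)),
         ρ * σ1 * σ2 * (1 + (s12 * r) ^ α12) ^ (-(β12 / α12));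
         ρ * σ1 * σ2 * (1 + (s12 * r) ^ α12) ^ (-(β12 / α12)),
         σ2 ^ 2 * (1 + (s22 * r) ^ α22) ^ (-(β22 / α22))])) :
    ρ = 0 :=
  bivariate_generalized_cauchy_necessary_beta_general n hn σ1 σ2 s11 s12 s22 α11 α12 α22 β11 β12 β22
    ρ hσ1 hσ2 hs11 hs12 hs22 hα11 hα22 hα12 hβ11 hβ12 hβ22 hlt hβ11n hβ22n hpd
end Grid
end
end

section
/- Let σ1, σ2 > 0, ρ ∈ [−1,1], and let ψ11, ψ22, ψ12 : [0,∞) → ℝ be continuous functions with ψ_{ij}(0) = 1 that are twice continuously differentiable on (0,∞) and satisfy: (i) ψ11''(r) ≥ 0 and ψ22''(r) ≥ 0 for all r > 0; (ii) ψ_{ij}(r) → 0 and r·ψ_{ij}'(r) → 0 as r → ∞ for all i,j ∈ {1,2}; (iii) the functions r ↦ r·ψ_{ij}''(r) are (absolutely) integrable on (0,∞) for all i,j ∈ {1,2}; (iv) ρ²·(ψ12''(r))² ≤ ψ11''(r)·ψ22''(r) for all r > 0. Then the matrix-valued function C : [0,∞) → ℝ^{2×2} with C11(r) = σ1²·ψ11(r),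 C22(r) = σ2²·ψ22(r), C12(r) = C21(r) = ρσ1σ2·ψ12(r) is positive definite in ℝ. -/
/-!
Integrating by parts twice (the fundamental theorem of calculus for `(t - r) ψ'(t) - ψ(t)` on
`(r, ∞)`) gives `ψ(r) = ∫₀^∞ ψ''(t) (t - r)₊ dt` for `r > 0`, and by continuity for `r = 0`. Hence
`C(r) = ∫₀^∞ (t - r)₊ M(t) dt` with `M = [[σ₁² ψ₁₁'', ρσ₁σ₂ ψ₁₂''], [ρσ₁σ₂ ψ₁₂'', σ₂² ψ₂₂'']]`,
which is positive semidefinite by (i) and (iv). For fixed `t`, `(t - |x - y|)₊` is the length of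
`(x, x + t) ∩ (y, y + t)`, so with `χᵢ` the indicator of `(xᵢ, xᵢ + t)`,
`∑ᵢⱼ aᵢᵀ M aⱼ (t - |xᵢ - xⱼ|)₊ = ∫ vᵀ M v du ≥ 0` for `v = ∑ᵢ χᵢ(u) aᵢ`; integrating in `t`
gives the claim.
-/

open Matrix Set Filter MeasureTheory

noncomputable section

theorem integral_sum_sum {α ι κ : Type*} [MeasurableSpace α] {μ : Measure α} [Fintype ι]
    [Fintype κ] {f : ι → κ → α → ℝ} (hf : ∀ i j, Integrable (f i j) μ) :
    ∫ x, ∑ i, ∑ j, f i j x ∂μ = ∑ i, ∑ j, ∫ x, f i j x ∂μ := by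
  rw [integral_finsetSum _ fun i _ => integrable_finsetSum _ fun j _ => hf i j]
  exact Finset.sum_congr rfl fun i _ => integral_finsetSum _ fun j _ => hf i j

theorem measureReal_Ioo_inter_Ioo (a b t : ℝ) :
    volume.real (Ioo a (a + t) ∩ Ioo b (b + t)) = max (t - |a - b|) 0 := by
  have hlen : min (a + t) (b + t) - max a b = t - |a - b| := by
    rcases le_total a b with h | h
    · rw [abs_of_nonpos (by linarith), max_eq_right h, min_eq_left (by linarith)]; ring
    · rw [abs_of_nonneg (by linarith), max_eq_left h, min_eq_right (by linarith)]; ring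
  rw [Ioo_inter_Ioo, measureReal_def, Real.volume_Ioo, hlen,
    ENNReal.toReal_ofReal']

theorem sum_dotProduct_mulVec_mul_max_sub_abs_nonneg {ι κ : Type*} [Fintype ι] [Fintype κ]
    {M : Matrix κ κ ℝ} (hM : M.PosSemidef) (a : ι → κ → ℝ) (y : ι → ℝ) (t : ℝ) :
    0 ≤ ∑ i, ∑ j, (a i ⬝ᵥ M *ᵥ a j) * max (t - |y i - y j|) 0 := by
  set χ : ι → ℝ → ℝ := fun i => (Ioo (y i) (y i + t)).indicator 1
  have hχ : ∀ i j, Integrable (fun u => χ i u * χ j u) := fun i j => by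
    rw [← Pi.mul_def, ← inter_indicator_one]
    exact (integrableOn_const (measure_ne_top_of_subset inter_subset_left
      measure_Ioo_lt_top.ne)).integrable_indicator (measurableSet_Ioo.inter measurableSet_Ioo)
  have hkernel : ∀ i j, max (t - |y i - y j|) 0 = ∫ u, χ i u * χ j u := fun i j => by
    rw [← Pi.mul_def, ← inter_indicator_one, integral_indicator_one
      (measurableSet_Ioo.inter measurableSet_Ioo), measureReal_Ioo_inter_Ioo]
  have hpoint : ∀ u, ∑ i, ∑ j, (a i ⬝ᵥ M *ᵥ a j) * (χ i u * χ j u)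
      = (∑ i, χ i u • a i) ⬝ᵥ M *ᵥ ∑ i, χ i u • a i := fun u => by
    simp only [mulVec_sum, dotProduct_sum, sum_dotProduct, mulVec_smul, dotProduct_smul,
      smul_dotProduct, smul_eq_mul]
    rw [Finset.sum_comm]
    refine Finset.sum_congr rfl fun j _ => ?_
    rw [Finset.mul_sum]
    exact Finset.sum_congr rfl fun i _ => by ring
  calc 0 ≤ ∫ u, (∑ i, χ i u • a i) ⬝ᵥ M *ᵥ ∑ i, χ i u • a i :=
        integral_nonneg fun u => by simpa using hM.dotProduct_mulVec_nonneg (∑ i, χ i u • a i)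
    _ = ∑ i, ∑ j, (a i ⬝ᵥ M *ᵥ a j) * max (t - |y i - y j|) 0 := by
      simp only [← hpoint, hkernel]
      rw [integral_finsetSum _ fun i _ => integrable_finsetSum _ fun j _ => (hχ i j).const_mul _]
      refine Finset.sum_congr rfl fun i _ => ?_
      rw [integral_finsetSum _ fun j _ => (hχ i j).const_mul _]
      exact Finset.sum_congr rfl fun j _ => integral_const_mul _ _

theorem posSemidef_fin_two_of_sq_le_mul {A B C : ℝ} (hA : 0 ≤ A) (hC : 0 ≤ C)
    (hB : B ^ 2 ≤ A * C) : (!![A, B; B, C]).PosSemidef := by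
  refine .of_dotProduct_mulVec_nonneg ?_ fun v => ?_
  · ext i j; fin_cases i <;> fin_cases j <;> rfl
  · simp only [star_trivial, dotProduct, mulVec, Fin.sum_univ_two, cons_val_zero, cons_val_one,
      of_apply]
    have hdisc : 0 ≤ A * C - B ^ 2 := sub_nonneg.2 hB
    -- with `x = v 0`, `y = v 1` and `q` the form:
    -- `A q = (A x + B y)² + (A C - B²) y²` and `C q = (B x + C y)² + (A C - B²) x²`
    have hsum : 0 ≤ (A + C) * (v 0 * (A * v 0 + B * v 1) + v 1 * (B * v 0 + C * v 1)) := by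
      nlinarith [sq_nonneg (A * v 0 + B * v 1), sq_nonneg (B * v 0 + C * v 1),
        mul_nonneg hdisc (add_nonneg (sq_nonneg (v 0)) (sq_nonneg (v 1)))]
    rcases (add_nonneg hA hC).eq_or_lt with h | h
    · obtain rfl : A = 0 := by linarith
      obtain rfl : C = 0 := by linarith
      obtain rfl : B = 0 := by nlinarith
      simp
    · exact nonneg_of_mul_nonneg_right hsum h

theorem tendsto_zero_of_tendsto_id_mul {f : ℝ → ℝ}
    (h : Tendsto (fun r => r * f r) atTop (nhds 0)) : Tendsto f atTop (nhds 0) := by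
  have := h.mul tendsto_inv_atTop_zero
  rw [zero_mul] at this
  refine this.congr' ?_
  filter_upwards [eventually_ne_atTop 0] with r hr
  field_simp

theorem integrableOn_mul_max_sub {g : ℝ → ℝ} (hg : IntegrableOn (fun t => t * g t) (Ioi 0))
    {r : ℝ} (hr : 0 ≤ r) : IntegrableOn (fun t => g t * max (t - r) 0) (Ioi 0) := by
  -- on `(0, ∞)` the integrand is `t g(t)` times the measurable factor `(t - r)₊ / t ∈ [0, 1]`
  have hbound : ∀ t ∈ Ioi (0 : ℝ), ‖max (t - r) 0 / t‖ ≤ 1 := fun t (ht : 0 < t) => by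
    rw [Real.norm_of_nonneg (div_nonneg (le_max_right _ _) ht.le), div_le_one ht]
    exact max_le (by linarith) ht.le
  refine IntegrableOn.congr_fun (hg.bdd_mul (f := fun t => max (t - r) 0 / t) (c := 1) ?_ ?_)
    (fun t (ht : 0 < t) => ?_) measurableSet_Ioi
  · exact (((continuous_id.sub continuous_const).max continuous_const).measurable.div
      measurable_id).aestronglyMeasurable
  · exact (ae_restrict_mem measurableSet_Ioi).mono hbound
  · field_simp

theorem continuousOn_integral_mul_max_sub {g : ℝ → ℝ}
    (hg : IntegrableOn (fun t => t * g t) (Ioi 0)) :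
    ContinuousOn (fun r => ∫ t in Ioi 0, g t * max (t - r) 0) (Ici 0) := by
  refine continuousOn_of_dominated (bound := fun t => ‖t * g t‖)
    (fun r hr => (integrableOn_mul_max_sub hg hr).aestronglyMeasurable)
    (fun r (hr : 0 ≤ r) => ?_) hg.norm
    (Eventually.of_forall fun t => (continuous_const.mul
      ((continuous_const.sub continuous_id).max continuous_const)).continuousOn)
  filter_upwards [ae_restrict_mem measurableSet_Ioi] with t (ht : 0 < t)
  rw [norm_mul, norm_mul, mul_comm ‖t‖]
  gcongr
  rw [Real.norm_of_nonneg (le_max_right _ _), Real.norm_of_nonneg ht.le]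
  exact max_le (by linarith) ht.le

section Representation

variable {ψ : ℝ → ℝ}

theorem integral_deriv_deriv_mul_max_sub_of_pos
    (hd : DifferentiableOn ℝ ψ (Ioi 0)) (hd2 : DifferentiableOn ℝ (deriv ψ) (Ioi 0))
    (hlim : Tendsto ψ atTop (nhds 0)) (hlim' : Tendsto (fun r => r * deriv ψ r) atTop (nhds 0))
    (hint : IntegrableOn (fun t => t * deriv (deriv ψ) t) (Ioi 0)) {r : ℝ} (hr : 0 < r) :
    ∫ t in Ioi 0, deriv (deriv ψ) t * max (t - r) 0 = ψ r := by
  have hdiff : ∀ t ∈ Ici r, HasDerivAt (fun t => (t - r) * deriv ψ t - ψ t)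
      ((t - r) * deriv (deriv ψ) t) t := fun t (ht : r ≤ t) => by
    have ht0 : Ioi (0 : ℝ) ∈ nhds t := Ioi_mem_nhds (hr.trans_le ht)
    refine ((((hasDerivAt_id t).sub_const r).mul (hd2.hasDerivAt ht0)).sub
      (hd.hasDerivAt ht0)).congr_deriv ?_
    simp only [id_eq]
    ring
  have hint_r : IntegrableOn (fun t => (t - r) * deriv (deriv ψ) t) (Ioi r) :=
    ((integrableOn_mul_max_sub hint hr.le).mono_set (Ioi_subset_Ioi hr.le)).congr_fun
      (fun t (ht : r < t) => by dsimp only; rw [max_eq_left (by linarith), mul_comm])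
      measurableSet_Ioi
  have hlim_f : Tendsto (fun t => (t - r) * deriv ψ t - ψ t) atTop (nhds 0) := by
    have := (hlim'.sub ((tendsto_zero_of_tendsto_id_mul hlim').const_mul r)).sub hlim
    simp only [mul_zero, sub_zero] at this
    exact this.congr fun t => by ring
  calc ∫ t in Ioi 0, deriv (deriv ψ) t * max (t - r) 0
      = ∫ t in Ioi r, deriv (deriv ψ) t * max (t - r) 0 :=
        setIntegral_eq_of_subset_of_forall_sdiff_eq_zero measurableSet_Ioi
          (Ioi_subset_Ioi hr.le) fun t ⟨_, (ht : ¬r < t)⟩ => by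
            rw [max_eq_right (by linarith [not_lt.1 ht]), mul_zero]
    _ = ∫ t in Ioi r, (t - r) * deriv (deriv ψ) t :=
        setIntegral_congr_fun measurableSet_Ioi fun t (ht : r < t) => by
          rw [max_eq_left (by linarith), mul_comm]
    _ = ψ r := by
        rw [integral_Ioi_of_hasDerivAt_of_tendsto' hdiff hint_r hlim_f]
        ring

theorem eqOn_integral_deriv_deriv_mul_max_sub (hcont : ContinuousOn ψ (Ici 0))
    (hd : DifferentiableOn ℝ ψ (Ioi 0)) (hd2 : DifferentiableOn ℝ (deriv ψ) (Ioi 0))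
    (hlim : Tendsto ψ atTop (nhds 0)) (hlim' : Tendsto (fun r => r * deriv ψ r) atTop (nhds 0))
    (hint : IntegrableOn (fun t => t * deriv (deriv ψ) t) (Ioi 0)) :
    EqOn (fun r => ∫ t in Ioi 0, deriv (deriv ψ) t * max (t - r) 0) ψ (Ici 0) :=
  EqOn.of_subset_closure
    (fun _ hs => integral_deriv_deriv_mul_max_sub_of_pos hd hd2 hlim hlim' hint hs)
    (continuousOn_integral_mul_max_sub hint) hcont Ioi_subset_Ici_self
    (closure_Ioi (0 : ℝ)).symm.subset

end Representation

theorem posDefIn_one_of_integral {C M : ℝ → Matrix (Fin 2) (Fin 2) ℝ}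
    (hM : ∀ t > 0, (M t).PosSemidef)
    (hint : ∀ k l, IntegrableOn (fun t => t * M t k l) (Ioi 0))
    (hC : ∀ r ≥ 0, ∀ k l, C r k l = ∫ t in Ioi 0, M t k l * max (t - r) 0) :
    PosDefIn 1 C := by
  intro p x a
  have hnorm : ∀ i j, ‖x i - x j‖ = |x i 0 - x j 0| := fun i j => by
    simp [EuclideanSpace.norm_eq, Real.sqrt_sq_eq_abs]
  have hform : ∀ (u v : Fin 2 → ℝ) (N : Matrix (Fin 2) (Fin 2) ℝ) (w : ℝ),
      (u ⬝ᵥ N *ᵥ v) * w = ∑ k, ∑ l, u k * v l * (N k l * w) := fun u v N w => by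
    simp only [dotProduct, mulVec, Finset.mul_sum, Finset.sum_mul]
    exact Finset.sum_congr rfl fun k _ => Finset.sum_congr rfl fun l _ => by ring
  set f : Fin p → Fin p → ℝ → ℝ :=
    fun i j t => (a i ⬝ᵥ M t *ᵥ a j) * max (t - |x i 0 - x j 0|) 0
  have hf_int : ∀ i j, IntegrableOn (f i j) (Ioi 0) := fun i j => by
    simp only [f, hform]
    exact integrable_finsetSum _ fun k _ => integrable_finsetSum _ fun l _ =>
      (integrableOn_mul_max_sub (hint k l) (abs_nonneg _)).const_mul _
  have hf : ∀ i j, a i ⬝ᵥ C ‖x i - x j‖ *ᵥ a j = ∫ t in Ioi 0, f i j t := fun i j => by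
    rw [hnorm, ← mul_one (a i ⬝ᵥ _), hform]
    simp only [f, hform, mul_one, hC _ (abs_nonneg _)]
    rw [integral_sum_sum fun k l =>
      (integrableOn_mul_max_sub (hint k l) (abs_nonneg _)).const_mul _]
    simp only [integral_const_mul]
  calc 0 ≤ ∫ t in Ioi 0, ∑ i, ∑ j, f i j t :=
        setIntegral_nonneg measurableSet_Ioi fun t ht =>
          sum_dotProduct_mulVec_mul_max_sub_abs_nonneg (hM t ht) a (fun i => x i 0) t
    _ = ∑ i, ∑ j, a i ⬝ᵥ C ‖x i - x j‖ *ᵥ a j := by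
        simp only [integral_sum_sum hf_int, hf]

theorem bivariate_sufficient_R1_general
    (σ1 σ2 ρ : ℝ)
    (ψ11 ψ22 ψ12 : ℝ → ℝ)
    (hcont11 : ContinuousOn ψ11 (Ici 0)) (hcont22 : ContinuousOn ψ22 (Ici 0))
    (hcont12 : ContinuousOn ψ12 (Ici 0))
    (hC11 : ContDiffOn ℝ 2 ψ11 (Ioi 0)) (hC22 : ContDiffOn ℝ 2 ψ22 (Ioi 0))
    (hC12 : ContDiffOn ℝ 2 ψ12 (Ioi 0))
    (hconv11 : ∀ r > (0 : ℝ), 0 ≤ deriv (deriv ψ11) r)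
    (hconv22 : ∀ r > (0 : ℝ), 0 ≤ deriv (deriv ψ22) r)
    (hlim11 : Tendsto ψ11 atTop (nhds 0)) (hlim22 : Tendsto ψ22 atTop (nhds 0))
    (hlim12 : Tendsto ψ12 atTop (nhds 0))
    (hlim11' : Tendsto (fun r => r * deriv ψ11 r) atTop (nhds 0))
    (hlim22' : Tendsto (fun r => r * deriv ψ22 r) atTop (nhds 0))
    (hlim12' : Tendsto (fun r => r * deriv ψ12 r) atTop (nhds 0))
    (hint11 : IntegrableOn (fun r => r * deriv (deriv ψ11) r) (Ioi 0))
    (hint22 : IntegrableOn (fun r => r * deriv (deriv ψ22) r) (Ioi 0))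
    (hint12 : IntegrableOn (fun r => r * deriv (deriv ψ12) r) (Ioi 0))
    (hineq : ∀ r > (0 : ℝ),
      ρ ^ 2 * (deriv (deriv ψ12) r) ^ 2 ≤ deriv (deriv ψ11) r * deriv (deriv ψ22) r) :
    PosDefIn 1 (fun r =>
      !![σ1 ^ 2 * ψ11 r, ρ * σ1 * σ2 * ψ12 r;
         ρ * σ1 * σ2 * ψ12 r, σ2 ^ 2 * ψ22 r]) := by
  have hdiff2 : ∀ {ψ : ℝ → ℝ}, ContDiffOn ℝ 2 ψ (Ioi 0) → DifferentiableOn ℝ (deriv ψ) (Ioi 0) :=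
    fun h => (h.deriv_of_isOpen isOpen_Ioi (by norm_num)).differentiableOn one_ne_zero
  have hrep11 := eqOn_integral_deriv_deriv_mul_max_sub hcont11
    (hC11.differentiableOn two_ne_zero) (hdiff2 hC11) hlim11 hlim11' hint11
  have hrep22 := eqOn_integral_deriv_deriv_mul_max_sub hcont22
    (hC22.differentiableOn two_ne_zero) (hdiff2 hC22) hlim22 hlim22' hint22
  have hrep12 := eqOn_integral_deriv_deriv_mul_max_sub hcont12
    (hC12.differentiableOn two_ne_zero) (hdiff2 hC12) hlim12 hlim12' hint12
  refine posDefIn_one_of_integral (M := fun t =>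
      !![σ1 ^ 2 * deriv (deriv ψ11) t, ρ * σ1 * σ2 * deriv (deriv ψ12) t;
         ρ * σ1 * σ2 * deriv (deriv ψ12) t, σ2 ^ 2 * deriv (deriv ψ22) t])
    (fun t ht => posSemidef_fin_two_of_sq_le_mul (by positivity [hconv11 t ht])
      (by positivity [hconv22 t ht]) ?_)
    (fun k l => ?_) (fun r hr k l => ?_)
  · nlinarith [hineq t ht, sq_nonneg (σ1 * σ2)]
  · fin_cases k <;> fin_cases l <;>
      simp only [Fin.zero_eta, Fin.mk_one, of_apply, cons_val', cons_val_zero, cons_val_one,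
        empty_val', cons_val_fin_one, mul_left_comm _ (_ ^ 2), mul_left_comm _ (ρ * _ * _)]
    exacts [hint11.const_mul _, hint12.const_mul _, hint12.const_mul _, hint22.const_mul _]
  · fin_cases k <;> fin_cases l <;>
      simp [integral_const_mul, mul_assoc, hrep11 hr, hrep12 hr, hrep22 hr]

/-- General sufficient condition for positive definiteness of a bivariate model in `ℝ`. -/
theorem bivariate_sufficient_R1
    (σ1 σ2 ρ : ℝ) (hσ1 : 0 < σ1) (hσ2 : 0 < σ2) (hρ : ρ ∈ Icc (-1 : ℝ) 1)
    (ψ11 ψ22 ψ12 : ℝ → ℝ)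
    (hcont11 : ContinuousOn ψ11 (Ici 0)) (hcont22 : ContinuousOn ψ22 (Ici 0))
    (hcont12 : ContinuousOn ψ12 (Ici 0))
    (h011 : ψ11 0 = 1) (h022 : ψ22 0 = 1) (h012 : ψ12 0 = 1)
    (hC11 : ContDiffOn ℝ 2 ψ11 (Ioi 0)) (hC22 : ContDiffOn ℝ 2 ψ22 (Ioi 0))
    (hC12 : ContDiffOn ℝ 2 ψ12 (Ioi 0))
    (hconv11 : ∀ r > (0 : ℝ), 0 ≤ deriv (deriv ψ11) r)
    (hconv22 : ∀ r > (0 : ℝ), 0 ≤ deriv (deriv ψ22) r)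
    (hlim11 : Tendsto ψ11 atTop (nhds 0)) (hlim22 : Tendsto ψ22 atTop (nhds 0))
    (hlim12 : Tendsto ψ12 atTop (nhds 0))
    (hlim11' : Tendsto (fun r => r * deriv ψ11 r) atTop (nhds 0))
    (hlim22' : Tendsto (fun r => r * deriv ψ22 r) atTop (nhds 0))
    (hlim12' : Tendsto (fun r => r * deriv ψ12 r) atTop (nhds 0))
    (hint11 : IntegrableOn (fun r => r * deriv (deriv ψ11) r) (Ioi 0))
    (hint22 : IntegrableOn (fun r => r * deriv (deriv ψ22) r) (Ioi 0))
    (hint12 : IntegrableOn (fun r => r * deriv (deriv ψ12) r) (Ioi 0))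
    (hineq : ∀ r > (0 : ℝ),
      ρ ^ 2 * (deriv (deriv ψ12) r) ^ 2 ≤ deriv (deriv ψ11) r * deriv (deriv ψ22) r) :
    PosDefIn 1 (fun r =>
      !![σ1 ^ 2 * ψ11 r, ρ * σ1 * σ2 * ψ12 r;
         ρ * σ1 * σ2 * ψ12 r, σ2 ^ 2 * ψ22 r]) :=
  bivariate_sufficient_R1_general σ1 σ2 ρ ψ11 ψ22 ψ12 hcont11 hcont22 hcont12 hC11 hC22 hC12 hconv11
    hconv22 hlim11 hlim22 hlim12 hlim11' hlim22' hlim12' hint11 hint22 hint12 hineq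
end
end
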